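/- arXiv:math/0612017 — 11 statements merged into one kernel-verified Lean document; each statement's English description precedes it below -/
import Mathlib

section
/- Let n ≤ 5 and let a₁,…,aₙ be unit vectors in ℝⁿ (with the Euclidean inner product). Assume the choice of signs ε = (1,…,1) maximizes ‖Σⱼ εⱼaⱼ‖ over all sign choices ε ∈ {−1,1}ⁿ (in particular s := a₁+⋯+aₙ ≠ 0). Then the normalized mean vector x = s/‖s‖ satisfies ∏_{j=1}^{n} |⟨x, aⱼ⟩| ≥ n^{−n/2}. -/
set_option maxHeartbeats 1000000

open scoped RealInnerProductSpace



private lemma smooth (lo hi a b : ℝ) (h1 : lo ≤ a) (h2 : a ≤ hi) (h3 : lo ≤ b) (h4 : b ≤ hi) :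
    ∃ c d : ℝ, (c = lo ∨ c = hi) ∧ lo ≤ d ∧ d ≤ hi ∧ c + d = a + b ∧ c * d ≤ a * b := by
  rcases le_total (a + b) (lo + hi) with h | h
  · exact ⟨lo, a + b - lo, Or.inl rfl, by linarith, by linarith, by ring, by nlinarith⟩
  · exact ⟨hi, a + b - hi, Or.inr rfl, by linarith, by linarith, by ring, by nlinarith⟩

private lemma lb (L v t : ℝ) (hv : v * L = 1) (hvp : 0 ≤ v) (m : 1 ≤ t * L) : v ≤ t := by
  have h := mul_le_mul_of_nonneg_right m hvp
  calc v = 1 * v := (one_mul v).symm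
    _ ≤ t * L * v := h
    _ = t * (v * L) := by ring
    _ = t := by rw [hv, mul_one]

section leaves
variable (L r v d : ℝ)

private lemma dl1 (hL : 0 < L) (hv : v * L = 1) (hvp : 0 ≤ v) (hvd : v ≤ d) : 1 ≤ d * L := by
  calc (1:ℝ) = v * L := hv.symm
    _ ≤ d * L := mul_le_mul_of_nonneg_right hvd hL.le

private lemma dl2 (hL : 0 < L) (hd1 : d ≤ 1) : d * L ≤ L := by
  calc d * L ≤ 1 * L := mul_le_mul_of_nonneg_right hd1 hL.le
    _ = L := one_mul L

-- n = 2 leaves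
private lemma leaf20 (hr : r^2 = 2) (hrp : 0 < r) (hL : 0 < L) (hL5 : L ≤ 2) (hrL : r ≤ L)
    (hv : v * L = 1) (hvp : 0 < v) (hvd : v ≤ d) (hd1 : d ≤ 1) (hs : 1 + d = L) :
    1 ≤ d * r ^ 2 := by
  have hdl1 : 1 ≤ d * L := dl1 L v d hL hv hvp.le hvd
  have hdL : d * L = L^2 - L := by linear_combination L * hs
  have hA : 1 ≤ L^2 - L := by linarith
  have core : L ≤ 2*(L^2 - L) := by nlinarith
  have core' : 1 ≤ 2*d := by nlinarith [core, hdL, hL]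
  calc (1:ℝ) ≤ 2*d := core'
    _ = d * r^2 := by rw [hr]; ring

private lemma leaf21 (hr : r^2 = 2) (hrp : 0 < r) (hL : 0 < L) (hL5 : L ≤ 2) (hrL : r ≤ L)
    (hv : v * L = 1) (hvp : 0 < v) (hvd : v ≤ d) (hd1 : d ≤ 1) (hs : v + d = L) :
    1 ≤ v * d * r ^ 2 := by
  have hdl1 : 1 ≤ d * L := dl1 L v d hL hv hvp.le hvd
  have hdL : d * L = L^2 - 1 := by linear_combination L * hs - hv
  have hA : 1 ≤ L^2 - 1 := by linarith
  have core : L^2 ≤ 2*(L^2 - 1) := by nlinarith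
  have core' : L ≤ 2*d := by nlinarith [core, hdL, hL]
  calc (1:ℝ) = v * L := hv.symm
    _ ≤ v * (2*d) := mul_le_mul_of_nonneg_left core' hvp.le
    _ = v * d * r^2 := by rw [hr]; ring

-- n = 3 leaves
private lemma leaf30 (hr : r^2 = 3) (hrp : 0 < r) (hL : 0 < L) (hL5 : L ≤ 3) (hrL : r ≤ L)
    (hv : v * L = 1) (hvp : 0 < v) (hvd : v ≤ d) (hd1 : d ≤ 1) (hs : 1 + 1 + d = L) :
    1 ≤ d * r ^ 3 := by
  have hdl1 : 1 ≤ d * L := dl1 L v d hL hv hvp.le hvd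
  have hdL : d * L = L^2 - 2*L := by linear_combination L * hs
  have hA : 1 ≤ L^2 - 2*L := by linarith
  have core : L ≤ 3*r*(L^2 - 2*L) := by nlinarith [sq_nonneg (r-1), mul_pos hrp hL]
  have core' : 1 ≤ 3*r*d := by nlinarith [core, hdL, hL]
  have hr3 : r^3 = 3*r := by linear_combination r*hr
  calc (1:ℝ) ≤ 3*r*d := core'
    _ = d * r^3 := by rw [hr3]; ring

private lemma leaf31 (hr : r^2 = 3) (hrp : 0 < r) (hL : 0 < L) (hL5 : L ≤ 3) (hrL : r ≤ L)
    (hv : v * L = 1) (hvp : 0 < v) (hvd : v ≤ d) (hd1 : d ≤ 1) (hs : v + 1 + d = L) :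
    1 ≤ v * d * r ^ 3 := by
  have hdl1 : 1 ≤ d * L := dl1 L v d hL hv hvp.le hvd
  have hdl2 : d * L ≤ L := dl2 L d hL hd1
  have hdL : d * L = L^2 - L - 1 := by linear_combination L * hs - hv
  have hA : 1 ≤ L^2 - L - 1 := by linarith
  have hB : L^2 - L - 1 ≤ L := by linarith
  have core : L^2 ≤ 3*r*(L^2 - L - 1) := by nlinarith [sq_nonneg (r-1), mul_pos hrp hL]
  have core' : L ≤ 3*r*d := by nlinarith [core, hdL, hL]
  have hr3 : r^3 = 3*r := by linear_combination r*hr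
  calc (1:ℝ) = v * L := hv.symm
    _ ≤ v * (3*r*d) := mul_le_mul_of_nonneg_left core' hvp.le
    _ = v * d * r^3 := by rw [hr3]; ring

private lemma leaf32 (hr : r^2 = 3) (hrp : 0 < r) (hL : 0 < L) (hL5 : L ≤ 3) (hrL : r ≤ L)
    (hv : v * L = 1) (hvp : 0 < v) (hvd : v ≤ d) (hd1 : d ≤ 1) (hs : v + v + d = L) :
    1 ≤ v ^ 2 * d * r ^ 3 := by
  have hdl1 : 1 ≤ d * L := dl1 L v d hL hv hvp.le hvd
  have hdl2 : d * L ≤ L := dl2 L d hL hd1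
  have hdL : d * L = L^2 - 2 := by linear_combination L * hs - 2*hv
  have hA : 1 ≤ L^2 - 2 := by linarith
  have hB : L^2 - 2 ≤ L := by linarith
  have core : L^3 ≤ 3*r*(L^2 - 2) := by
    have key : 3*r*(L^2-2) - L^3 = 9*(L-r) - (L-r)^3 + (3*L - r)*(r^2-3) := by ring
    rw [hr] at key
    have hep : 0 ≤ L - r := by linarith
    have heup : L - r ≤ 3 := by nlinarith
    nlinarith [key, mul_nonneg (mul_nonneg hep hep) (by linarith : (0:ℝ) ≤ 3 - (L-r)),
      mul_nonneg hep (by linarith : (0:ℝ) ≤ 3 - (L-r))]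
  have core' : L^2 ≤ 3*r*d := by nlinarith [core, hdL, hL]
  have hr3 : r^3 = 3*r := by linear_combination r*hr
  calc (1:ℝ) = v^2 * L^2 := by rw [← mul_pow, hv, one_pow]
    _ ≤ v^2 * (3*r*d) := mul_le_mul_of_nonneg_left core' (by positivity)
    _ = v^2 * d * r^3 := by rw [hr3]; ring

-- n = 4 leaves
private lemma leaf40 (hr : r^2 = 4) (hrp : 0 < r) (hL : 0 < L) (hL5 : L ≤ 4) (hrL : r ≤ L)
    (hv : v * L = 1) (hvp : 0 < v) (hvd : v ≤ d) (hd1 : d ≤ 1) (hs : 1 + 1 + 1 + d = L) :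
    1 ≤ d * r ^ 4 := by
  have hdl1 : 1 ≤ d * L := dl1 L v d hL hv hvp.le hvd
  have hdL : d * L = L^2 - 3*L := by linear_combination L * hs
  have hA : 1 ≤ L^2 - 3*L := by linarith
  have core : L ≤ 16*(L^2 - 3*L) := by nlinarith
  have core' : 1 ≤ 16*d := by nlinarith [core, hdL, hL]
  have hr4 : r^4 = 16 := by linear_combination (r^2+4)*hr
  calc (1:ℝ) ≤ 16*d := core'
    _ = d * r^4 := by rw [hr4]; ring

private lemma leaf41 (hr : r^2 = 4) (hrp : 0 < r) (hL : 0 < L) (hL5 : L ≤ 4) (hrL : r ≤ L)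
    (hv : v * L = 1) (hvp : 0 < v) (hvd : v ≤ d) (hd1 : d ≤ 1) (hs : v + 1 + 1 + d = L) :
    1 ≤ v * d * r ^ 4 := by
  have hdl1 : 1 ≤ d * L := dl1 L v d hL hv hvp.le hvd
  have hdl2 : d * L ≤ L := dl2 L d hL hd1
  have hdL : d * L = L^2 - 2*L - 1 := by linear_combination L * hs - hv
  have hA : 1 ≤ L^2 - 2*L - 1 := by linarith
  have hB : L^2 - 2*L - 1 ≤ L := by linarith
  have core : L^2 ≤ 16*(L^2 - 2*L - 1) := by nlinarith
  have core' : L ≤ 16*d := by nlinarith [core, hdL, hL]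
  have hr4 : r^4 = 16 := by linear_combination (r^2+4)*hr
  calc (1:ℝ) = v * L := hv.symm
    _ ≤ v * (16*d) := mul_le_mul_of_nonneg_left core' hvp.le
    _ = v * d * r^4 := by rw [hr4]; ring

private lemma leaf42 (hr : r^2 = 4) (hrp : 0 < r) (hL : 0 < L) (hL5 : L ≤ 4) (hrL : r ≤ L)
    (hv : v * L = 1) (hvp : 0 < v) (hvd : v ≤ d) (hd1 : d ≤ 1) (hs : v + v + 1 + d = L) :
    1 ≤ v ^ 2 * d * r ^ 4 := by
  have hdl1 : 1 ≤ d * L := dl1 L v d hL hv hvp.le hvd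
  have hdl2 : d * L ≤ L := dl2 L d hL hd1
  have hdL : d * L = L^2 - L - 2 := by linear_combination L * hs - 2*hv
  have hA : 1 ≤ L^2 - L - 2 := by linarith
  have hB : L^2 - L - 2 ≤ L := by linarith
  have core : L^3 ≤ 16*(L^2 - L - 2) := by nlinarith [mul_pos hL hL, sq_nonneg (L-2)]
  have core' : L^2 ≤ 16*d := by nlinarith [core, hdL, hL]
  have hr4 : r^4 = 16 := by linear_combination (r^2+4)*hr
  calc (1:ℝ) = v^2 * L^2 := by rw [← mul_pow, hv, one_pow]
    _ ≤ v^2 * (16*d) := mul_le_mul_of_nonneg_left core' (by positivity)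
    _ = v^2 * d * r^4 := by rw [hr4]; ring

private lemma leaf43 (hr : r^2 = 4) (hrp : 0 < r) (hL : 0 < L) (hL5 : L ≤ 4) (hrL : r ≤ L)
    (hv : v * L = 1) (hvp : 0 < v) (hvd : v ≤ d) (hd1 : d ≤ 1) (hs : v + v + v + d = L) :
    1 ≤ v ^ 3 * d * r ^ 4 := by
  have hdl1 : 1 ≤ d * L := dl1 L v d hL hv hvp.le hvd
  have hdl2 : d * L ≤ L := dl2 L d hL hd1
  have hdL : d * L = L^2 - 3 := by linear_combination L * hs - 3*hv
  have hA : 1 ≤ L^2 - 3 := by linarith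
  have hB : L^2 - 3 ≤ L := by linarith
  have core : L^4 ≤ 16*(L^2 - 3) := by
    have hr2 : r = 2 := by nlinarith
    have h4 : 4 ≤ L^2 := by nlinarith
    nlinarith [mul_nonneg (by linarith : (0:ℝ) ≤ L^2 - 4) (by nlinarith : (0:ℝ) ≤ 12 - L^2)]
  have core' : L^3 ≤ 16*d := by nlinarith [core, hdL, hL]
  have hr4 : r^4 = 16 := by linear_combination (r^2+4)*hr
  calc (1:ℝ) = v^3 * L^3 := by rw [← mul_pow, hv, one_pow]
    _ ≤ v^3 * (16*d) := mul_le_mul_of_nonneg_left core' (by positivity)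
    _ = v^3 * d * r^4 := by rw [hr4]; ring

-- n = 5 leaves
private lemma leaf50 (hr : r^2 = 5) (hrp : 0 < r) (hL : 0 < L) (hL5 : L ≤ 5) (hrL : r ≤ L)
    (hv : v * L = 1) (hvp : 0 < v) (hvd : v ≤ d) (hd1 : d ≤ 1) (hs : 1 + 1 + 1 + 1 + d = L) :
    1 ≤ d * r ^ 5 := by
  have hdl1 : 1 ≤ d * L := dl1 L v d hL hv hvp.le hvd
  have hdL : d * L = L^2 - 4*L := by linear_combination L * hs
  have hA : 1 ≤ L^2 - 4*L := by linarith
  have core : L ≤ 25*r*(L^2 - 4*L) := by nlinarith [sq_nonneg (r-2), mul_pos hrp hL]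
  have core' : 1 ≤ 25*r*d := by nlinarith [core, hdL, hL]
  have hr5 : r^5 = 25*r := by linear_combination (r^3+5*r)*hr
  calc (1:ℝ) ≤ 25*r*d := core'
    _ = d * r^5 := by rw [hr5]; ring

private lemma leaf51 (hr : r^2 = 5) (hrp : 0 < r) (hL : 0 < L) (hL5 : L ≤ 5) (hrL : r ≤ L)
    (hv : v * L = 1) (hvp : 0 < v) (hvd : v ≤ d) (hd1 : d ≤ 1) (hs : v + 1 + 1 + 1 + d = L) :
    1 ≤ v * d * r ^ 5 := by
  have hdl1 : 1 ≤ d * L := dl1 L v d hL hv hvp.le hvd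
  have hdl2 : d * L ≤ L := dl2 L d hL hd1
  have hdL : d * L = L^2 - 3*L - 1 := by linear_combination L * hs - hv
  have hA : 1 ≤ L^2 - 3*L - 1 := by linarith
  have hB : L^2 - 3*L - 1 ≤ L := by linarith
  have core : L^2 ≤ 25*r*(L^2 - 3*L - 1) := by nlinarith [sq_nonneg (r-2), mul_pos hrp hL]
  have core' : L ≤ 25*r*d := by nlinarith [core, hdL, hL]
  have hr5 : r^5 = 25*r := by linear_combination (r^3+5*r)*hr
  calc (1:ℝ) = v * L := hv.symm
    _ ≤ v * (25*r*d) := mul_le_mul_of_nonneg_left core' hvp.le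
    _ = v * d * r^5 := by rw [hr5]; ring

private lemma leaf52 (hr : r^2 = 5) (hrp : 0 < r) (hL : 0 < L) (hL5 : L ≤ 5) (hrL : r ≤ L)
    (hv : v * L = 1) (hvp : 0 < v) (hvd : v ≤ d) (hd1 : d ≤ 1) (hs : v + v + 1 + 1 + d = L) :
    1 ≤ v ^ 2 * d * r ^ 5 := by
  have hdl1 : 1 ≤ d * L := dl1 L v d hL hv hvp.le hvd
  have hdl2 : d * L ≤ L := dl2 L d hL hd1
  have hdL : d * L = L^2 - 2*L - 2 := by linear_combination L * hs - 2*hv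
  have hA : 1 ≤ L^2 - 2*L - 2 := by linarith
  have hB : L^2 - 2*L - 2 ≤ L := by linarith
  have core : L^3 ≤ 25*r*(L^2 - 2*L - 2) := by
    nlinarith [sq_nonneg (r-2), mul_pos hrp hL, mul_pos hL hL]
  have core' : L^2 ≤ 25*r*d := by nlinarith [core, hdL, hL]
  have hr5 : r^5 = 25*r := by linear_combination (r^3+5*r)*hr
  calc (1:ℝ) = v^2 * L^2 := by rw [← mul_pow, hv, one_pow]
    _ ≤ v^2 * (25*r*d) := mul_le_mul_of_nonneg_left core' (by positivity)
    _ = v^2 * d * r^5 := by rw [hr5]; ring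

private lemma leaf53 (hr : r^2 = 5) (hrp : 0 < r) (hL : 0 < L) (hL5 : L ≤ 5) (hrL : r ≤ L)
    (hv : v * L = 1) (hvp : 0 < v) (hvd : v ≤ d) (hd1 : d ≤ 1) (hs : v + v + v + 1 + d = L) :
    1 ≤ v ^ 3 * d * r ^ 5 := by
  have hdl1 : 1 ≤ d * L := dl1 L v d hL hv hvp.le hvd
  have hdl2 : d * L ≤ L := dl2 L d hL hd1
  have hdL : d * L = L^2 - L - 3 := by linear_combination L * hs - 3*hv
  have hA : 1 ≤ L^2 - L - 3 := by linarith
  have hB : L^2 - L - 3 ≤ L := by linarith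
  have core : L^4 ≤ 25*r*(L^2 - L - 3) := by
    nlinarith [sq_nonneg (r-2), mul_pos hrp hL, mul_pos hL hL, sq_nonneg (L-3),
      sq_nonneg (L*L - 2*L - 3)]
  have core' : L^3 ≤ 25*r*d := by nlinarith [core, hdL, hL]
  have hr5 : r^5 = 25*r := by linear_combination (r^3+5*r)*hr
  calc (1:ℝ) = v^3 * L^3 := by rw [← mul_pow, hv, one_pow]
    _ ≤ v^3 * (25*r*d) := mul_le_mul_of_nonneg_left core' (by positivity)
    _ = v^3 * d * r^5 := by rw [hr5]; ring

private lemma leaf54 (hr : r^2 = 5) (hrp : 0 < r) (hL : 0 < L) (hL5 : L ≤ 5) (hrL : r ≤ L)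
    (hv : v * L = 1) (hvp : 0 < v) (hvd : v ≤ d) (hd1 : d ≤ 1) (hs : v + v + v + v + d = L) :
    1 ≤ v ^ 4 * d * r ^ 5 := by
  have hdl1 : 1 ≤ d * L := dl1 L v d hL hv hvp.le hvd
  have hdl2 : d * L ≤ L := dl2 L d hL hd1
  have hdL : d * L = L^2 - 4 := by linear_combination L * hs - 4*hv
  have hA : 1 ≤ L^2 - 4 := by linarith
  have hB : L^2 - 4 ≤ L := by linarith
  have core : L^5 ≤ 25*r*(L^2 - 4) := by
    have hrlo : 11/5 ≤ r := by nlinarith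
    have hrhi : r ≤ 9/4 := by nlinarith
    have hLhi : L ≤ 13/5 := by nlinarith
    have hep : 0 ≤ L - r := by linarith
    have heup : L - r ≤ 2/5 := by linarith
    have key : 25*r*(L^2-4) - L^5 =
        125*(L-r) - 25*r*(L-r)^2 - 50*(L-r)^3 - 5*r*(L-r)^4 - (L-r)^5
        + (4*r^3 - 15*r^2*L + 20*r*L^2 - 5*r - 10*L^3 + 25*L) * (r^2 - 5) := by
      ring
    rw [hr] at key
    have e2 : 0 ≤ (L-r)^2 := sq_nonneg _
    have e4 : 0 ≤ (L-r)^4 := by positivity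
    have c2 : (L-r)^2 ≤ (2/5)*(L-r) := by nlinarith
    have c3 : (L-r)^3 ≤ (4/25)*(L-r) := by nlinarith [mul_le_mul_of_nonneg_right c2 hep, c2]
    have c4 : (L-r)^4 ≤ (8/125)*(L-r) := by nlinarith [mul_le_mul_of_nonneg_right c3 hep, c2]
    have c5 : (L-r)^5 ≤ (16/625)*(L-r) := by nlinarith [mul_le_mul_of_nonneg_right c4 hep, c2]
    nlinarith [key, c2, c3, c4, c5, hep,
      mul_nonneg (by linarith : (0:ℝ) ≤ 9/4 - r) e2,
      mul_nonneg (by linarith : (0:ℝ) ≤ 9/4 - r) e4]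
  have core' : L^4 ≤ 25*r*d := by nlinarith [core, hdL, hL]
  have hr5 : r^5 = 25*r := by linear_combination (r^3+5*r)*hr
  calc (1:ℝ) = v^4 * L^4 := by rw [← mul_pow, hv, one_pow]
    _ ≤ v^4 * (25*r*d) := mul_le_mul_of_nonneg_left core' (by positivity)
    _ = v^4 * d * r^5 := by rw [hr5]; ring

end leaves
-- key2..key5 (to be appended to keys.lean)
private lemma key2 (L r t1 t2 : ℝ) (hr : r^2 = 2) (hrp : 0 < r) (hL : 0 < L)
    (hsum : t1 + t2 = L)
    (m1 : 1 ≤ t1 * L) (m2 : 1 ≤ t2 * L)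
    (u1 : t1 ≤ 1) (u2 : t2 ≤ 1) :
    1 ≤ t1 * t2 * r ^ 2 := by
  obtain ⟨v, hv, hvp⟩ : ∃ v, v * L = 1 ∧ 0 < v := ⟨L⁻¹, inv_mul_cancel₀ hL.ne', inv_pos.2 hL⟩
  have l1 : v ≤ t1 := lb L v t1 hv hvp.le m1
  have l2 : v ≤ t2 := lb L v t2 hv hvp.le m2
  have hL5 : L ≤ 2 := by linarith
  have hLL : L * L = t1*L + t2*L := by linear_combination (-L) * hsum
  have h5L : 2 ≤ L * L := by linarith
  have hrL : r ≤ L := by nlinarith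
  obtain ⟨c1, d1, hc1, hd1l, hd1u, hs1, hp1⟩ := smooth v 1 t1 t2 l1 u1 l2 u2
  have hsumc : c1 + d1 = L := by linarith
  have hrn : (0:ℝ) ≤ r ^ 2 := by positivity
  have hchain : c1 * d1 ≤ t1 * t2 := hp1
  have h' : 1 ≤ c1 * d1 * r ^ 2 → 1 ≤ t1 * t2 * r ^ 2 := by
    intro h; nlinarith [mul_le_mul_of_nonneg_right hchain hrn]
  apply h'
  rcases hc1 with h1 | h1 <;> rw [h1] at hsumc ⊢ <;>
  first
    | linarith [leaf21 L r v d1 hr hrp hL hL5 hrL hv hvp hd1l hd1u (by linarith)]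
    | linarith [leaf20 L r v d1 hr hrp hL hL5 hrL hv hvp hd1l hd1u (by linarith)]

private lemma key3 (L r t1 t2 t3 : ℝ) (hr : r^2 = 3) (hrp : 0 < r) (hL : 0 < L)
    (hsum : t1 + t2 + t3 = L)
    (m1 : 1 ≤ t1 * L) (m2 : 1 ≤ t2 * L) (m3 : 1 ≤ t3 * L)
    (u1 : t1 ≤ 1) (u2 : t2 ≤ 1) (u3 : t3 ≤ 1) :
    1 ≤ t1 * t2 * t3 * r ^ 3 := by
  obtain ⟨v, hv, hvp⟩ : ∃ v, v * L = 1 ∧ 0 < v := ⟨L⁻¹, inv_mul_cancel₀ hL.ne', inv_pos.2 hL⟩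
  have l1 : v ≤ t1 := lb L v t1 hv hvp.le m1
  have l2 : v ≤ t2 := lb L v t2 hv hvp.le m2
  have l3 : v ≤ t3 := lb L v t3 hv hvp.le m3
  have hL5 : L ≤ 3 := by linarith
  have hLL : L * L = t1*L + t2*L + t3*L := by linear_combination (-L) * hsum
  have h5L : 3 ≤ L * L := by linarith
  have hrL : r ≤ L := by nlinarith
  obtain ⟨c1, d1, hc1, hd1l, hd1u, hs1, hp1⟩ := smooth v 1 t1 t2 l1 u1 l2 u2
  obtain ⟨c2, d2, hc2, hd2l, hd2u, hs2, hp2⟩ := smooth v 1 d1 t3 hd1l hd1u l3 u3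
  have hc1p : 0 ≤ c1 := by rcases hc1 with h | h <;> rw [h] <;> [exact hvp.le; norm_num]
  have ht3p : 0 ≤ t3 := le_trans hvp.le l3
  have hchain : c1 * c2 * d2 ≤ t1 * t2 * t3 := by
    calc c1 * c2 * d2 = c1 * (c2 * d2) := by ring
      _ ≤ c1 * (d1 * t3) := mul_le_mul_of_nonneg_left hp2 hc1p
      _ = (c1 * d1) * t3 := by ring
      _ ≤ (t1 * t2) * t3 := mul_le_mul_of_nonneg_right hp1 ht3p
  have hsumc : c1 + c2 + d2 = L := by linarith
  have hrn : (0:ℝ) ≤ r ^ 3 := by positivity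
  have h' : 1 ≤ c1 * c2 * d2 * r ^ 3 → 1 ≤ t1 * t2 * t3 * r ^ 3 := by
    intro h; nlinarith [mul_le_mul_of_nonneg_right hchain hrn]
  apply h'
  rcases hc1 with h1 | h1 <;> rcases hc2 with h2 | h2 <;> rw [h1, h2] at hsumc ⊢ <;>
  first
    | linarith [leaf32 L r v d2 hr hrp hL hL5 hrL hv hvp hd2l hd2u (by linarith)]
    | linarith [leaf31 L r v d2 hr hrp hL hL5 hrL hv hvp hd2l hd2u (by linarith)]
    | linarith [leaf30 L r v d2 hr hrp hL hL5 hrL hv hvp hd2l hd2u (by linarith)]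

private lemma key4 (L r t1 t2 t3 t4 : ℝ) (hr : r^2 = 4) (hrp : 0 < r) (hL : 0 < L)
    (hsum : t1 + t2 + t3 + t4 = L)
    (m1 : 1 ≤ t1 * L) (m2 : 1 ≤ t2 * L) (m3 : 1 ≤ t3 * L) (m4 : 1 ≤ t4 * L)
    (u1 : t1 ≤ 1) (u2 : t2 ≤ 1) (u3 : t3 ≤ 1) (u4 : t4 ≤ 1) :
    1 ≤ t1 * t2 * t3 * t4 * r ^ 4 := by
  obtain ⟨v, hv, hvp⟩ : ∃ v, v * L = 1 ∧ 0 < v := ⟨L⁻¹, inv_mul_cancel₀ hL.ne', inv_pos.2 hL⟩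
  have l1 : v ≤ t1 := lb L v t1 hv hvp.le m1
  have l2 : v ≤ t2 := lb L v t2 hv hvp.le m2
  have l3 : v ≤ t3 := lb L v t3 hv hvp.le m3
  have l4 : v ≤ t4 := lb L v t4 hv hvp.le m4
  have hL5 : L ≤ 4 := by linarith
  have hLL : L * L = t1*L + t2*L + t3*L + t4*L := by linear_combination (-L) * hsum
  have h5L : 4 ≤ L * L := by linarith
  have hrL : r ≤ L := by nlinarith
  obtain ⟨c1, d1, hc1, hd1l, hd1u, hs1, hp1⟩ := smooth v 1 t1 t2 l1 u1 l2 u2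
  obtain ⟨c2, d2, hc2, hd2l, hd2u, hs2, hp2⟩ := smooth v 1 d1 t3 hd1l hd1u l3 u3
  obtain ⟨c3, d3, hc3, hd3l, hd3u, hs3, hp3⟩ := smooth v 1 d2 t4 hd2l hd2u l4 u4
  have hc1p : 0 ≤ c1 := by rcases hc1 with h | h <;> rw [h] <;> [exact hvp.le; norm_num]
  have hc2p : 0 ≤ c2 := by rcases hc2 with h | h <;> rw [h] <;> [exact hvp.le; norm_num]
  have ht3p : 0 ≤ t3 := le_trans hvp.le l3
  have ht4p : 0 ≤ t4 := le_trans hvp.le l4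
  have hchain : c1 * c2 * c3 * d3 ≤ t1 * t2 * t3 * t4 := by
    calc c1 * c2 * c3 * d3 = (c1 * c2) * (c3 * d3) := by ring
      _ ≤ (c1 * c2) * (d2 * t4) := mul_le_mul_of_nonneg_left hp3 (mul_nonneg hc1p hc2p)
      _ = (c1 * (c2 * d2)) * t4 := by ring
      _ ≤ (c1 * (d1 * t3)) * t4 :=
          mul_le_mul_of_nonneg_right (mul_le_mul_of_nonneg_left hp2 hc1p) ht4p
      _ = (c1 * d1) * (t3 * t4) := by ring
      _ ≤ (t1 * t2) * (t3 * t4) := mul_le_mul_of_nonneg_right hp1 (mul_nonneg ht3p ht4p)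
      _ = t1 * t2 * t3 * t4 := by ring
  have hsumc : c1 + c2 + c3 + d3 = L := by linarith
  have hrn : (0:ℝ) ≤ r ^ 4 := by positivity
  have h' : 1 ≤ c1 * c2 * c3 * d3 * r ^ 4 → 1 ≤ t1 * t2 * t3 * t4 * r ^ 4 := by
    intro h; nlinarith [mul_le_mul_of_nonneg_right hchain hrn]
  apply h'
  rcases hc1 with h1 | h1 <;> rcases hc2 with h2 | h2 <;> rcases hc3 with h3 | h3 <;>
    rw [h1, h2, h3] at hsumc ⊢ <;>
  first
    | linarith [leaf43 L r v d3 hr hrp hL hL5 hrL hv hvp hd3l hd3u (by linarith)]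
    | linarith [leaf42 L r v d3 hr hrp hL hL5 hrL hv hvp hd3l hd3u (by linarith)]
    | linarith [leaf41 L r v d3 hr hrp hL hL5 hrL hv hvp hd3l hd3u (by linarith)]
    | linarith [leaf40 L r v d3 hr hrp hL hL5 hrL hv hvp hd3l hd3u (by linarith)]

private lemma key5 (L r t1 t2 t3 t4 t5 : ℝ) (hr : r^2 = 5) (hrp : 0 < r) (hL : 0 < L)
    (hsum : t1 + t2 + t3 + t4 + t5 = L)
    (m1 : 1 ≤ t1 * L) (m2 : 1 ≤ t2 * L) (m3 : 1 ≤ t3 * L) (m4 : 1 ≤ t4 * L) (m5 : 1 ≤ t5 * L)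
    (u1 : t1 ≤ 1) (u2 : t2 ≤ 1) (u3 : t3 ≤ 1) (u4 : t4 ≤ 1) (u5 : t5 ≤ 1) :
    1 ≤ t1 * t2 * t3 * t4 * t5 * r ^ 5 := by
  obtain ⟨v, hv, hvp⟩ : ∃ v, v * L = 1 ∧ 0 < v := ⟨L⁻¹, inv_mul_cancel₀ hL.ne', inv_pos.2 hL⟩
  have l1 : v ≤ t1 := lb L v t1 hv hvp.le m1
  have l2 : v ≤ t2 := lb L v t2 hv hvp.le m2
  have l3 : v ≤ t3 := lb L v t3 hv hvp.le m3
  have l4 : v ≤ t4 := lb L v t4 hv hvp.le m4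
  have l5 : v ≤ t5 := lb L v t5 hv hvp.le m5
  have hL5 : L ≤ 5 := by linarith
  have hLL : L * L = t1*L + t2*L + t3*L + t4*L + t5*L := by linear_combination (-L) * hsum
  have h5L : 5 ≤ L * L := by linarith
  have hrL : r ≤ L := by nlinarith
  obtain ⟨c1, d1, hc1, hd1l, hd1u, hs1, hp1⟩ := smooth v 1 t1 t2 l1 u1 l2 u2
  obtain ⟨c2, d2, hc2, hd2l, hd2u, hs2, hp2⟩ := smooth v 1 d1 t3 hd1l hd1u l3 u3
  obtain ⟨c3, d3, hc3, hd3l, hd3u, hs3, hp3⟩ := smooth v 1 d2 t4 hd2l hd2u l4 u4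
  obtain ⟨c4, d4, hc4, hd4l, hd4u, hs4, hp4⟩ := smooth v 1 d3 t5 hd3l hd3u l5 u5
  have hc1p : 0 ≤ c1 := by rcases hc1 with h | h <;> rw [h] <;> [exact hvp.le; norm_num]
  have hc2p : 0 ≤ c2 := by rcases hc2 with h | h <;> rw [h] <;> [exact hvp.le; norm_num]
  have hc3p : 0 ≤ c3 := by rcases hc3 with h | h <;> rw [h] <;> [exact hvp.le; norm_num]
  have ht3p : 0 ≤ t3 := le_trans hvp.le l3
  have ht4p : 0 ≤ t4 := le_trans hvp.le l4
  have ht5p : 0 ≤ t5 := le_trans hvp.le l5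
  have hchain : c1 * c2 * c3 * c4 * d4 ≤ t1 * t2 * t3 * t4 * t5 := by
    calc c1 * c2 * c3 * c4 * d4 = (c1 * c2 * c3) * (c4 * d4) := by ring
      _ ≤ (c1 * c2 * c3) * (d3 * t5) :=
          mul_le_mul_of_nonneg_left hp4 (mul_nonneg (mul_nonneg hc1p hc2p) hc3p)
      _ = ((c1 * c2) * (c3 * d3)) * t5 := by ring
      _ ≤ ((c1 * c2) * (d2 * t4)) * t5 :=
          mul_le_mul_of_nonneg_right
            (mul_le_mul_of_nonneg_left hp3 (mul_nonneg hc1p hc2p)) ht5p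
      _ = ((c1 * (c2 * d2)) * (t4 * t5)) := by ring
      _ ≤ ((c1 * (d1 * t3)) * (t4 * t5)) :=
          mul_le_mul_of_nonneg_right (mul_le_mul_of_nonneg_left hp2 hc1p)
            (mul_nonneg ht4p ht5p)
      _ = (c1 * d1) * (t3 * (t4 * t5)) := by ring
      _ ≤ (t1 * t2) * (t3 * (t4 * t5)) :=
          mul_le_mul_of_nonneg_right hp1 (mul_nonneg ht3p (mul_nonneg ht4p ht5p))
      _ = t1 * t2 * t3 * t4 * t5 := by ring
  have hsumc : c1 + c2 + c3 + c4 + d4 = L := by linarith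
  have hrn : (0:ℝ) ≤ r ^ 5 := by positivity
  have h' : 1 ≤ c1 * c2 * c3 * c4 * d4 * r ^ 5 → 1 ≤ t1 * t2 * t3 * t4 * t5 * r ^ 5 := by
    intro h; nlinarith [mul_le_mul_of_nonneg_right hchain hrn]
  apply h'
  rcases hc1 with h1 | h1 <;> rcases hc2 with h2 | h2 <;> rcases hc3 with h3 | h3 <;>
    rcases hc4 with h4 | h4 <;> rw [h1, h2, h3, h4] at hsumc ⊢ <;>
  first
    | linarith [leaf54 L r v d4 hr hrp hL hL5 hrL hv hvp hd4l hd4u (by linarith)]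
    | linarith [leaf53 L r v d4 hr hrp hL hL5 hrL hv hvp hd4l hd4u (by linarith)]
    | linarith [leaf52 L r v d4 hr hrp hL hL5 hrL hv hvp hd4l hd4u (by linarith)]
    | linarith [leaf51 L r v d4 hr hrp hL hL5 hrL hv hvp hd4l hd4u (by linarith)]
    | linarith [leaf50 L r v d4 hr hrp hL hL5 hrL hv hvp hd4l hd4u (by linarith)]

private lemma keyn (n : ℕ) (hn : 0 < n) (hn5 : n ≤ 5) (L r : ℝ) (hr : r ^ 2 = (n : ℝ))
    (hrp : 0 < r) (hL : 0 < L) (t : Fin n → ℝ) (hsum : ∑ j, t j = L)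
    (hm : ∀ j, 1 ≤ t j * L) (hu : ∀ j, t j ≤ 1) :
    1 ≤ (∏ j, t j) * r ^ n := by
  interval_cases n <;> push_cast at hr
  · rw [Fin.prod_univ_one]
    rw [Fin.sum_univ_one] at hsum
    have h1 := hm 0
    have h2 := hu 0
    have hR1 : r = 1 := by nlinarith
    rw [hR1, hsum] at *
    rw [hsum] at h1
    nlinarith
  · rw [Fin.prod_univ_two]
    rw [Fin.sum_univ_two] at hsum
    exact key2 L r _ _ hr hrp hL hsum (hm 0) (hm 1) (hu 0) (hu 1)
  · rw [Fin.prod_univ_three]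
    rw [Fin.sum_univ_three] at hsum
    exact key3 L r _ _ _ hr hrp hL hsum (hm 0) (hm 1) (hm 2) (hu 0) (hu 1) (hu 2)
  · rw [Fin.prod_univ_four]
    rw [Fin.sum_univ_four] at hsum
    exact key4 L r _ _ _ _ hr hrp hL hsum (hm 0) (hm 1) (hm 2) (hm 3) (hu 0) (hu 1) (hu 2) (hu 3)
  · rw [Fin.prod_univ_five]
    rw [Fin.sum_univ_five] at hsum
    exact key5 L r _ _ _ _ _ hr hrp hL hsum (hm 0) (hm 1) (hm 2) (hm 3) (hm 4)
      (hu 0) (hu 1) (hu 2) (hu 3) (hu 4)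


/-- Pappas–Révész: for `n ≤ 5` and unit vectors `a₁,…,aₙ` in `ℝⁿ` such that the all-`+1`
choice of signs maximizes the length of the signed sum, the normalized mean vector
`x = s/‖s‖` (with `s = a₁+⋯+aₙ`) satisfies `∏ⱼ |⟨x,aⱼ⟩| ≥ n^(-n/2)`. -/
theorem stmt0 (n : ℕ) (hn : 0 < n) (hn5 : n ≤ 5)
    (a : Fin n → EuclideanSpace ℝ (Fin n)) (ha : ∀ j, ‖a j‖ = 1)
    (hmax : ∀ ε : Fin n → ℝ, (∀ j, ε j = 1 ∨ ε j = -1) →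
      ‖∑ j, ε j • a j‖ ≤ ‖∑ j, a j‖) :
    ∏ j, |⟪(‖∑ i, a i‖⁻¹ • ∑ i, a i : EuclideanSpace ℝ (Fin n)), a j⟫| ≥
      (n : ℝ) ^ (-(n : ℝ) / 2) := by
  set s : EuclideanSpace ℝ (Fin n) := ∑ i, a i with hs
  set L : ℝ := ‖s‖ with hLdef
  -- sign-flip inequality
  have hflip : ∀ j, 1 ≤ ⟪s, a j⟫ := by
    intro j
    have hmj := hmax (fun i => if i = j then (-1:ℝ) else 1)
      (fun i => by by_cases h : i = j <;> simp [h])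
    have hsum_eq : ∑ i, (if i = j then (-1:ℝ) else 1) • a i = s - (2:ℝ) • a j := by
      have h1 : ∀ i ∈ Finset.univ, (if i = j then (-1:ℝ) else 1) • a i
          = a i + (if i = j then (-(2:ℝ)) • a j else 0) := by
        intro i _
        by_cases h : i = j
        · subst h; simp; module
        · simp [h]
      rw [Finset.sum_congr rfl h1, Finset.sum_add_distrib, Finset.sum_ite_eq' Finset.univ j]
      simp [hs]
      module
    rw [hsum_eq] at hmj
    have hsq : ‖s - (2:ℝ) • a j‖^2 ≤ ‖s‖^2 := by
      apply pow_le_pow_left₀ (norm_nonneg _) hmj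
    rw [norm_sub_sq_real] at hsq
    have hnj : ‖(2:ℝ) • a j‖ = 2 := by
      rw [norm_smul, ha j]; norm_num
    rw [real_inner_smul_right, hnj] at hsq
    linarith
  -- L bounds
  have hL2 : (n:ℝ) ≤ L^2 := by
    have h1 : ∑ j, ⟪s, a j⟫ = L^2 := by
      rw [← inner_sum, ← hs, @real_inner_self_eq_norm_sq]
    have h2 : (n:ℝ) = ∑ _j : Fin n, (1:ℝ) := by simp
    rw [h2, ← h1]
    exact Finset.sum_le_sum fun j _ => hflip j
  have hLpos : 0 < L := by
    have : (1:ℝ) ≤ (n:ℝ) := by exact_mod_cast hn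
    nlinarith [norm_nonneg s]
  set x : EuclideanSpace ℝ (Fin n) := ‖∑ i, a i‖⁻¹ • ∑ i, a i with hx
  have hxs : x = L⁻¹ • s := rfl
  -- properties of t j = ⟪x, a j⟫
  have htL : ∀ j, ⟪x, a j⟫ * L = ⟪s, a j⟫ := by
    intro j
    rw [hxs, real_inner_smul_left]
    field_simp
  have hm : ∀ j, 1 ≤ ⟪x, a j⟫ * L := fun j => (htL j).symm ▸ hflip j
  have htpos : ∀ j, 0 < ⟪x, a j⟫ := by
    intro j
    have := hm j
    nlinarith
  have hxnorm : ‖x‖ = 1 := by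
    rw [hxs, norm_smul, norm_inv, norm_norm, ← hLdef, inv_mul_cancel₀ hLpos.ne']
  have hu : ∀ j, ⟪x, a j⟫ ≤ 1 := by
    intro j
    calc ⟪x, a j⟫ ≤ ‖x‖ * ‖a j‖ := real_inner_le_norm x (a j)
      _ = 1 := by rw [hxnorm, ha j]; norm_num
  have hsumt : ∑ j, ⟪x, a j⟫ = L := by
    rw [← inner_sum, ← hs, hxs, real_inner_smul_left, @real_inner_self_eq_norm_sq, ← hLdef]
    field_simp
  -- remove absolute values
  have habs : ∏ j, |⟪x, a j⟫| = ∏ j, ⟪x, a j⟫ :=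
    Finset.prod_congr rfl fun j _ => abs_of_pos (htpos j)
  rw [ge_iff_le, habs]
  -- rewrite target
  set R : ℝ := Real.sqrt n with hR
  have hRp : 0 < R := Real.sqrt_pos.2 (by exact_mod_cast hn)
  have hR2 : R^2 = (n:ℝ) := Real.sq_sqrt (by positivity)
  have htar : (n:ℝ) ^ (-(n:ℝ)/2) = (R ^ n)⁻¹ := by
    rw [neg_div, Real.rpow_neg (by positivity)]
    congr 1
    rw [show ((n:ℝ)/2 : ℝ) = (1/2) * (n:ℕ) by push_cast; ring,
      Real.rpow_mul (by positivity), Real.rpow_natCast]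
    congr 1
    rw [hR, Real.sqrt_eq_rpow]
  rw [htar]
  have hkey : 1 ≤ (∏ j, ⟪x, a j⟫) * R ^ n :=
    keyn n hn hn5 L R (by exact_mod_cast hR2) hRp hLpos (fun j => ⟪x, a j⟫) hsumt hm hu
  have hRn : 0 < R ^ n := pow_pos hRp n
  rw [inv_le_iff_one_le_mul₀ hRn]
  exact hkey
end

section
/- Let n ≤ 5 and let a₁,…,aₙ be unit vectors in ℂⁿ (with the standard Hermitian inner product). Assume the choice of unimodular scalars εⱼ = 1 for all j maximizes ‖Σⱼ εⱼaⱼ‖ over all choices of unimodular complex scalars ε₁,…,εₙ (in particular s := a₁+⋯+aₙ ≠ 0). Then the normalized mean vector z = s/‖s‖ satisfies ∏_{j=1}^{n} |⟨z, aⱼ⟩| ≥ n^{−n/2}. -/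
open scoped ComplexInnerProductSpace


lemma log_bound (n : ℕ) (h2 : 2 ≤ n) (h5 : n ≤ 5) : (n : ℝ)/4 ≤ Real.log n := by
  interval_cases n
  · have := Real.log_two_gt_d9; norm_num; linarith
  · rw [show ((3:ℕ):ℝ) = 3 by norm_num, Real.le_log_iff_exp_le (by norm_num)]
    have h1 : Real.exp (3/4) ≤ Real.exp 1 := Real.exp_le_exp.2 (by norm_num)
    have := Real.exp_one_lt_d9; linarith
  · rw [show ((4:ℕ):ℝ) = 4 by norm_num, Real.le_log_iff_exp_le (by norm_num)]
    have h1 : Real.exp (4/4) = Real.exp 1 := by norm_num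
    have := Real.exp_one_lt_d9; linarith
  · rw [show ((5:ℕ):ℝ) = 5 by norm_num, Real.le_log_iff_exp_le (by norm_num)]
    have h4 : Real.exp (5/4) ^ (4:ℕ) < 5 ^ (4:ℕ) := by
      rw [← Real.exp_nat_mul]
      have h5 : Real.exp ((4:ℕ) * (5/4)) = Real.exp 1 ^ (5:ℕ) := by
        rw [← Real.exp_nat_mul]; norm_num
      rw [h5]
      calc Real.exp 1 ^ (5:ℕ) < 2.7182818286 ^ (5:ℕ) :=
            pow_lt_pow_left₀ Real.exp_one_lt_d9 (le_of_lt (Real.exp_pos 1)) (by norm_num)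
        _ < 5 ^ (4:ℕ) := by norm_num
    exact le_of_lt (lt_of_pow_lt_pow_left₀ 4 (by norm_num) h4)

lemma chord {S x : ℝ} (hS : 1 < S) (hx1 : 1/S ≤ x) (hx2 : x ≤ 1) :
    -(Real.log S * (S * (1 - x) / (S - 1))) ≤ Real.log x := by
  have h0 : (0:ℝ) < S := by linarith
  have hSx : 1 ≤ S * x := by
    rw [div_le_iff₀ h0] at hx1; linarith [hx1]
  set l : ℝ := S * (1 - x) / (S - 1) with hl
  have hl0 : 0 ≤ l := div_nonneg (mul_nonneg h0.le (by linarith)) (by linarith)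
  have hl1 : l ≤ 1 := by
    rw [hl, div_le_one (by linarith)]; nlinarith
  have hS0 : S ≠ 0 := h0.ne'
  have hS1' : S - 1 ≠ 0 := sub_ne_zero.mpr hS.ne'
  have hcomb : l • (1/S) + (1 - l) • (1:ℝ) = x := by
    simp only [smul_eq_mul, hl]
    field_simp
    ring
  have hconc := (strictConcaveOn_log_Ioi.concaveOn).2
    (Set.mem_Ioi.2 (by positivity : (0:ℝ) < 1/S)) (Set.mem_Ioi.2 one_pos)
    hl0 (by linarith : (0:ℝ) ≤ 1 - l) (by ring)
  rw [hcomb] at hconc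
  simp only [smul_eq_mul, Real.log_one, mul_zero, add_zero, one_div, Real.log_inv] at hconc
  linarith

lemma poly_step (r S LS LR : ℝ) (hB : 0 ≤ S * (r^2 - S)) (hSr : 0 ≤ S - r)
    (hlogS' : r * LS ≤ r * LR + (S - r)) (h2 : S * (r^2 - S) ≤ r * LR * (S + r)) :
    r * (LS * (S * (r^2 - S))) ≤ r * (LR * (r^2 * (S - 1))) := by
  have H1 := mul_le_mul_of_nonneg_right hlogS' hB
  have H2 := mul_le_mul_of_nonneg_left h2 hSr
  linarith [H1, H2]

set_option maxHeartbeats 2000000 in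
lemma real_key (n : ℕ) (hn : 1 ≤ n) (hn5 : n ≤ 5) (S : ℝ) (hS : Real.sqrt n ≤ S)
    (x : Fin n → ℝ) (hx1 : ∀ j, 1/S ≤ x j) (hx2 : ∀ j, x j ≤ 1)
    (hsum : S ≤ ∑ j, x j) :
    (n : ℝ) ^ (-(n:ℝ)/2) ≤ ∏ j, x j := by
  have hn1 : (1:ℝ) ≤ n := by exact_mod_cast hn
  have hone : (1:ℝ) ≤ Real.sqrt n := Real.one_le_sqrt.2 hn1
  by_cases hS1 : S ≤ 1
  · -- S = 1, all x j = 1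
    have hSeq : S = 1 := le_antisymm hS1 (le_trans hone hS)
    have hxall : ∀ j, x j = 1 := fun j =>
      le_antisymm (hx2 j) (by have := hx1 j; rw [hSeq] at this; simpa using this)
    rw [Finset.prod_congr rfl (fun j _ => hxall j), Finset.prod_const_one]
    exact Real.rpow_le_one_of_one_le_of_nonpos hn1 (by linarith : -(n:ℝ)/2 ≤ 0)
  · push_neg at hS1
    have h0 : (0:ℝ) < S := by linarith
    -- S ≤ n
    have hTn : ∑ j, x j ≤ (n:ℝ) := by
      calc ∑ j, x j ≤ ∑ _j : Fin n, (1:ℝ) := Finset.sum_le_sum (fun j _ => hx2 j)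
        _ = n := by simp
    have hSn : S ≤ (n:ℝ) := le_trans hsum hTn
    have hn2 : 2 ≤ n := by
      have : (1:ℝ) < n := lt_of_lt_of_le hS1 hSn
      exact_mod_cast Nat.succ_le_of_lt (by exact_mod_cast this)
    have hn2' : (2:ℝ) ≤ n := by exact_mod_cast hn2
    set r := Real.sqrt (n:ℝ) with hr
    have hr0 : 0 ≤ r := Real.sqrt_nonneg _
    have hr2 : r^2 = n := Real.sq_sqrt (by positivity)
    have hr1 : 1 < r := by nlinarith
    have hx0 : ∀ j, 0 < x j := fun j => lt_of_lt_of_le (by positivity) (hx1 j)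
    have hprod : ∏ j, x j = Real.exp (∑ j, Real.log (x j)) := by
      rw [Real.exp_sum]
      exact Finset.prod_congr rfl fun j _ => (Real.exp_log (hx0 j)).symm
    have hrhs : (n:ℝ) ^ (-(n:ℝ)/2) = Real.exp (Real.log n * (-(n:ℝ)/2)) :=
      Real.rpow_def_of_pos (by positivity) _
    rw [hprod, hrhs, Real.exp_le_exp]
    clear hrhs hprod
    set T := ∑ j, x j with hT
    have hsum2 : ∑ j, -(Real.log S * (S * (1 - x j) / (S - 1))) ≤ ∑ j, Real.log (x j) :=
      Finset.sum_le_sum (fun j _ => chord hS1 (hx1 j) (hx2 j))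
    have hS1' : S - 1 ≠ 0 := sub_ne_zero.mpr hS1.ne'
    have hsimp : ∑ j : Fin n, -(Real.log S * (S * (1 - x j) / (S - 1)))
        = -(Real.log S * (S * ((n:ℝ) - T) / (S - 1))) := by
      have e1 : ∀ j : Fin n, -(Real.log S * (S * (1 - x j) / (S - 1)))
          = (Real.log S * S/(S-1)) * x j - (Real.log S * S/(S-1)) := by
        intro j; field_simp; ring
      rw [Finset.sum_congr rfl (fun j _ => e1 j), Finset.sum_sub_distrib,
        ← Finset.mul_sum, Finset.sum_const, Finset.card_univ, Fintype.card_fin,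
        nsmul_eq_mul, ← hT]
      field_simp
      ring
    rw [hsimp] at hsum2
    -- monotonicity in T
    have hlogS0 : 0 ≤ Real.log S := Real.log_nonneg hS1.le
    have hmono : Real.log S * (S * ((n:ℝ) - S) / (S - 1))
        ≥ Real.log S * (S * ((n:ℝ) - T) / (S - 1)) := by
      apply mul_le_mul_of_nonneg_left _ hlogS0
      apply div_le_div_of_nonneg_right _ (by linarith)
      · apply mul_le_mul_of_nonneg_left (by linarith) h0.le
    -- main inequality
    have hlogr : r^2/8 ≤ Real.log r := by
      have h := log_bound n hn2 hn5
      rw [hr, Real.log_sqrt (by positivity)]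
      linarith [hr2 ▸ h]
    have hlogS' : r * Real.log S ≤ r * Real.log r + (S - r) := by
      have h := Real.log_le_sub_one_of_pos (show 0 < S/r by positivity)
      rw [Real.log_div h0.ne' (by positivity : r ≠ 0)] at h
      have hrpos : 0 < r := by linarith
      have h3 := mul_le_mul_of_nonneg_right h hrpos.le
      have h4 : S / r * r = S := div_mul_cancel₀ _ hrpos.ne'
      nlinarith [h3, h4]
    have hB : 0 ≤ S * (r^2 - S) := mul_nonneg h0.le (by nlinarith)
    have hSr : 0 ≤ S - r := by linarith
    have h2 : S * (r^2 - S) ≤ r * Real.log r * (S + r) := by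
      have h2a := mul_le_mul_of_nonneg_left (show 2*r ≤ S + r by linarith)
        (show (0:ℝ) ≤ r^3/8 by positivity)
      have h2b := mul_le_mul_of_nonneg_left hlogr
        (show (0:ℝ) ≤ r * (S + r) from mul_nonneg hr0 (by linarith))
      nlinarith [h2a, h2b, sq_nonneg (2*S - r^2)]
    have hlognr : Real.log (n:ℝ) = 2 * Real.log r := by
      rw [hr, Real.log_sqrt (by positivity)]; ring
    have hrpos : (0:ℝ) < r := by linarith
    have hpoly : r * (Real.log S * (S * (r^2 - S))) ≤ r * (Real.log r * (r^2 * (S - 1))) := by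
      exact poly_step r S _ _ hB hSr hlogS' h2
    have hmain0 : Real.log S * (S * (r^2 - S)) ≤ Real.log r * (r^2 * (S - 1)) :=
      le_of_mul_le_mul_left hpoly hrpos
    have hmain : Real.log S * (S * ((n:ℝ) - S) / (S - 1)) ≤ Real.log n * ((n:ℝ)/2) := by
      rw [hlognr, ← hr2]
      have e2 : Real.log S * (S * (r^2 - S) / (S - 1))
          = Real.log S * (S * (r^2 - S)) / (S - 1) := by ring
      rw [e2, div_le_iff₀ (by linarith : (0:ℝ) < S - 1)]
      nlinarith [hmain0]
    linarith

set_option maxHeartbeats 1000000 in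
/-- Complex analogue of the Pappas–Révész result: for `n ≤ 5` and unit vectors
`a₁,…,aₙ` in `ℂⁿ` such that the choice of unimodular scalars `εⱼ = 1` maximizes
the length of the signed sum, the normalized mean vector `z = s/‖s‖`
satisfies `∏ⱼ |⟨z,aⱼ⟩| ≥ n^(-n/2)`. -/
theorem stmt1 (n : ℕ) (hn : 0 < n) (hn5 : n ≤ 5)
    (a : Fin n → EuclideanSpace ℂ (Fin n)) (ha : ∀ j, ‖a j‖ = 1)
    (hmax : ∀ ε : Fin n → ℂ, (∀ j, ‖ε j‖ = 1) →
      ‖∑ j, ε j • a j‖ ≤ ‖∑ j, a j‖) :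
    ∏ j, ‖⟪(‖∑ i, a i‖⁻¹ • ∑ i, a i : EuclideanSpace ℂ (Fin n)), a j⟫‖ ≥
      (n : ℝ) ^ (-(n : ℝ) / 2) := by
  set s : EuclideanSpace ℂ (Fin n) := ∑ i, a i with hs
  -- Step 1: key positivity from maximality
  have key : ∀ j, ‖(⟪s - a j, a j⟫ : ℂ)‖ ≤ (⟪s - a j, a j⟫ : ℂ).re := by
    intro j
    set w : ℂ := ⟪s - a j, a j⟫ with hw
    by_cases hw0 : w = 0
    · simp [hw0]
    · set u : ℂ := (‖w‖ : ℂ) / w with hu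
      have hun : ‖u‖ = 1 := by
        rw [hu, norm_div, Complex.norm_real, norm_norm, div_self (norm_ne_zero_iff.2 hw0)]
      have huw : u * w = (‖w‖ : ℂ) := by
        rw [hu]; field_simp
      set ε : Fin n → ℂ := Function.update (fun _ => (1:ℂ)) j u with hε
      have hεn : ∀ k, ‖ε k‖ = 1 := by
        intro k
        rw [hε, Function.update_apply]
        split
        · exact hun
        · exact norm_one
      have hsplit : ∑ k, ε k • a k = (s - a j) + u • a j := by
        rw [← Finset.add_sum_erase _ _ (Finset.mem_univ j)]
        have h1 : ε j = u := by rw [hε]; simp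
        have h2 : ∀ k ∈ Finset.univ.erase j, ε k • a k = a k := by
          intro k hk
          rw [hε, Function.update_of_ne (Finset.ne_of_mem_erase hk), one_smul]
        rw [Finset.sum_congr rfl h2, h1, Finset.sum_erase_eq_sub (Finset.mem_univ j), ← hs]
        abel
      have hle := hmax ε hεn
      rw [hsplit] at hle
      have hsq : ‖(s - a j) + u • a j‖ ^ 2 ≤ ‖s‖ ^ 2 :=
        pow_le_pow_left₀ (norm_nonneg _) hle 2
      have hexp1 : ‖(s - a j) + u • a j‖ ^ 2
          = ‖s - a j‖ ^ 2 + 2 * (⟪s - a j, u • a j⟫ : ℂ).re + ‖u • a j‖ ^ 2 := by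
        exact norm_add_sq (𝕜 := ℂ) _ _
      have hexp2 : ‖s‖ ^ 2 = ‖s - a j‖ ^ 2 + 2 * (⟪s - a j, a j⟫ : ℂ).re + ‖a j‖ ^ 2 := by
        have := norm_add_sq (𝕜 := ℂ) (s - a j) (a j)
        rwa [sub_add_cancel] at this
      have hi1 : (⟪s - a j, u • a j⟫ : ℂ) = u * w := by
        rw [inner_smul_right, hw]
      have hi2 : ((u * w).re : ℝ) = ‖w‖ := by rw [huw, Complex.ofReal_re]
      have hn1 : ‖u • a j‖ = 1 := by rw [norm_smul, hun, ha j, one_mul]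
      rw [hexp1, hi1] at hsq
      rw [hexp2] at hsq
      rw [hn1, ha j] at hsq
      have : (u * w).re = ‖w‖ := hi2
      rw [this] at hsq
      linarith
  -- Step 2: re of inner with s
  have hinner : ∀ j, (⟪s, a j⟫ : ℂ) = ⟪s - a j, a j⟫ + 1 := by
    intro j
    conv_lhs => rw [show s = s - a j + a j by abel]
    rw [inner_add_left, inner_self_eq_norm_sq_to_K, ha j]
    norm_num
    rw [inner_sub_left]; simp [inner_self_eq_norm_sq_to_K, ha j]
  have hre1 : ∀ j, (1:ℝ) ≤ (⟪s, a j⟫ : ℂ).re := by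
    intro j
    rw [hinner j, Complex.add_re, Complex.one_re]
    have h1 := key j
    have h2 := norm_nonneg (⟪s - a j, a j⟫ : ℂ)
    linarith
  have hnorm1 : ∀ j, (1:ℝ) ≤ ‖(⟪s, a j⟫ : ℂ)‖ := by
    intro j
    calc (1:ℝ) ≤ (⟪s, a j⟫ : ℂ).re := hre1 j
      _ ≤ ‖(⟪s, a j⟫ : ℂ)‖ := by
          exact Complex.re_le_norm _
  have hre_le : ∀ j, (⟪s, a j⟫ : ℂ).re ≤ ‖(⟪s, a j⟫ : ℂ)‖ := by
    intro j
    exact Complex.re_le_norm _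
  have hsumre : ∑ j, (⟪s, a j⟫ : ℂ).re = ‖s‖ ^ 2 := by
    have h1 : (⟪s, s⟫ : ℂ) = ∑ j, (⟪s, a j⟫ : ℂ) := by
      conv_lhs => rw [hs]
      rw [inner_sum]
    have h2 : ((⟪s, s⟫ : ℂ)).re = ∑ j, (⟪s, a j⟫ : ℂ).re := by
      rw [h1, Complex.re_sum]
    rw [← h2, inner_self_eq_norm_sq_to_K]
    norm_cast
  set S : ℝ := ‖s‖ with hS
  have hS2 : (n:ℝ) ≤ S ^ 2 := by
    rw [← hsumre]
    calc (n:ℝ) = ∑ _j : Fin n, (1:ℝ) := by simp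
      _ ≤ ∑ j, (⟪s, a j⟫ : ℂ).re := Finset.sum_le_sum (fun j _ => hre1 j)
  have hn1 : (1:ℝ) ≤ (n:ℝ) := by exact_mod_cast hn
  have hSpos : 0 < S := by
    rcases lt_or_ge 0 S with h | h
    · exact h
    · exfalso
      have : S = 0 := le_antisymm h (norm_nonneg s)
      rw [this] at hS2; norm_num at hS2; linarith
  have hsqrt : Real.sqrt (n:ℝ) ≤ S := by
    rw [← Real.sqrt_sq hSpos.le]
    exact Real.sqrt_le_sqrt hS2
  -- identify the goal's terms
  have hterm : ∀ j, ‖⟪(‖∑ i, a i‖⁻¹ • ∑ i, a i : EuclideanSpace ℂ (Fin n)), a j⟫‖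
      = S⁻¹ * ‖(⟪s, a j⟫ : ℂ)‖ := by
    intro j
    rw [← hs, ← hS]
    rw [RCLike.real_smul_eq_coe_smul (K := ℂ) S⁻¹ s, inner_smul_left]
    rw [norm_mul, RCLike.norm_conj, RCLike.norm_ofReal, abs_of_pos (inv_pos.2 hSpos)]
  have hfin : (n:ℝ) ^ (-(n:ℝ)/2) ≤ ∏ j, S⁻¹ * ‖(⟪s, a j⟫ : ℂ)‖ := by
    apply real_key n hn hn5 S hsqrt
    · intro j
      rw [one_div]
      calc S⁻¹ = S⁻¹ * 1 := by ring
        _ ≤ S⁻¹ * ‖(⟪s, a j⟫ : ℂ)‖ :=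
          mul_le_mul_of_nonneg_left (hnorm1 j) (inv_nonneg.2 hSpos.le)
    · intro j
      have hCS : ‖(⟪s, a j⟫ : ℂ)‖ ≤ S := by
        calc ‖(⟪s, a j⟫ : ℂ)‖ ≤ ‖s‖ * ‖a j‖ := norm_inner_le_norm _ _
          _ = S := by rw [ha j, mul_one]
      calc S⁻¹ * ‖(⟪s, a j⟫ : ℂ)‖ ≤ S⁻¹ * S :=
            mul_le_mul_of_nonneg_left hCS (inv_nonneg.2 hSpos.le)
        _ = 1 := inv_mul_cancel₀ hSpos.ne'
    · rw [← Finset.mul_sum]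
      have h1 : S ^ 2 ≤ ∑ j, ‖(⟪s, a j⟫ : ℂ)‖ := by
        rw [← hsumre]
        exact Finset.sum_le_sum (fun j _ => hre_le j)
      calc S = S⁻¹ * S ^ 2 := by field_simp
        _ ≤ S⁻¹ * ∑ j, ‖(⟪s, a j⟫ : ℂ)‖ :=
          mul_le_mul_of_nonneg_left h1 (inv_nonneg.2 hSpos.le)
  rw [ge_iff_le, Finset.prod_congr rfl (fun j _ => hterm j)]
  exact hfin
end

section
/- Let a₁,…,aₙ be unit vectors in a complex Hilbert space and let ε = (ε₁,…,εₙ) be a choice of unimodular complex scalars maximizing ‖a_ε‖ = ‖Σₖ εₖaₖ‖ over all such choices. Then for every j = 1,…,n the inner product ⟨a_ε, εⱼaⱼ⟩ is a real number and ⟨a_ε, εⱼaⱼ⟩ ≥ 1 (i.e., its imaginary part is 0 and its real part is at least 1). -/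
open scoped ComplexInnerProductSpace

/-- If the unimodular scalars `ε` maximize `‖Σₖ εₖaₖ‖` for unit vectors `aₖ` in a complex
Hilbert space, then for every `j` the inner product `⟨a_ε, εⱼaⱼ⟩` is real and `≥ 1`. -/
theorem stmt3 {H : Type*} [NormedAddCommGroup H] [InnerProductSpace ℂ H] [CompleteSpace H]
    (n : ℕ) (a : Fin n → H) (ha : ∀ j, ‖a j‖ = 1)
    (ε : Fin n → ℂ) (hε : ∀ j, ‖ε j‖ = 1)
    (hmax : ∀ ε' : Fin n → ℂ, (∀ j, ‖ε' j‖ = 1) →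
      ‖∑ k, ε' k • a k‖ ≤ ‖∑ k, ε k • a k‖) :
    ∀ j, (⟪∑ k, ε k • a k, ε j • a j⟫).im = 0 ∧
      1 ≤ (⟪∑ k, ε k • a k, ε j • a j⟫).re := by
  intro j
  classical
  set b : H := ∑ k ∈ Finset.univ.erase j, ε k • a k with hb
  set c : ℂ := ⟪b, ε j • a j⟫ with hc
  have hεaj : ‖ε j • a j‖ = 1 := by rw [norm_smul, hε j, ha j, one_mul]
  have hsplit : ∑ k, ε k • a k = b + ε j • a j := by
    rw [hb, Finset.sum_erase_add _ _ (Finset.mem_univ j)]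
  obtain ⟨θ, hθ1, hθc⟩ : ∃ θ : ℂ, ‖θ‖ = 1 ∧ θ * c = (‖c‖ : ℂ) := by
    by_cases h : c = 0
    · exact ⟨1, by simp, by simp [h]⟩
    · refine ⟨(starRingEnd ℂ) c / (‖c‖ : ℂ), ?_, ?_⟩
      · rw [norm_div]
        simp only [Complex.norm_conj, Complex.norm_real, Real.norm_eq_abs,
          abs_of_nonneg (norm_nonneg c)]
        exact div_self (norm_ne_zero_iff.mpr h)
      · have hcne : (‖c‖ : ℂ) ≠ 0 := by exact_mod_cast norm_ne_zero_iff.mpr h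
        rw [div_mul_eq_mul_div, Complex.conj_mul', sq, mul_div_assoc,
          div_self hcne, mul_one]
  set ε' : Fin n → ℂ := Function.update ε j (θ * ε j) with hε'def
  have hε' : ∀ k, ‖ε' k‖ = 1 := by
    intro k
    by_cases hk : k = j
    · subst hk; simp [hε'def, norm_mul, hθ1, hε]
    · simp [hε'def, Function.update_of_ne hk, hε]
  have hsplit' : ∑ k, ε' k • a k = b + θ • (ε j • a j) := by
    rw [← Finset.sum_erase_add _ _ (Finset.mem_univ j)]
    congr 1
    · refine Finset.sum_congr rfl fun k hk => ?_
      rw [hε'def, Function.update_of_ne (Finset.ne_of_mem_erase hk)]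
    · rw [hε'def, Function.update_self, smul_smul]
  have key : ‖c‖ ≤ c.re := by
    have hle := hmax ε' hε'
    rw [hsplit, hsplit'] at hle
    have h1 : ‖b + ε j • a j‖ ^ 2 = ‖b‖ ^ 2 + 2 * c.re + 1 := by
      rw [@norm_add_sq ℂ]
      simp [hεaj, ← hc, RCLike.re_to_complex]
    have h2 : ‖b + θ • (ε j • a j)‖ ^ 2 = ‖b‖ ^ 2 + 2 * ‖c‖ + 1 := by
      rw [@norm_add_sq ℂ]
      rw [inner_smul_right, hθc]
      rw [norm_smul, hθ1, one_mul, hεaj]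
      norm_num
    have hsq : ‖b + θ • (ε j • a j)‖ ^ 2 ≤ ‖b + ε j • a j‖ ^ 2 := by
      exact pow_le_pow_left₀ (norm_nonneg _) hle 2
    rw [h1, h2] at hsq
    linarith
  have habs : |c.re| ≤ ‖c‖ := Complex.abs_re_le_norm c
  have him : c.im = 0 := by
    have hre : c.re = ‖c‖ := le_antisymm (le_of_abs_le habs) key
    have := Complex.sq_norm c
    rw [Complex.normSq_apply, ← hre] at this
    nlinarith [sq_nonneg c.im]
  have hre0 : 0 ≤ c.re := le_trans (norm_nonneg c) key
  have hinner : ⟪∑ k, ε k • a k, ε j • a j⟫ = c + 1 := by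
    rw [hsplit, inner_add_left, ← hc]
    congr 1
    rw [@inner_self_eq_norm_sq_to_K ℂ, hεaj]
    norm_num
  rw [hinner]
  constructor
  · simp [him]
  · simp [Complex.add_re]
    linarith
end

section
/- Let a₁,…,aₙ be unit vectors in a real Hilbert space, set s = a₁+⋯+aₙ and yⱼ = ⟨s, aⱼ⟩. Assume 1 ≤ yⱼ ≤ 3.5 for every j = 1,…,n. Then s ≠ 0 and the vector x = s/‖s‖ satisfies ∏_{j=1}^{n} |⟨x, aⱼ⟩| ≥ n^{−n/2}; in particular sup{|⟨x,a₁⟩⋯⟨x,aₙ⟩| : ‖x‖ ≤ 1} ≥ n^{−n/2}. -/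
open scoped RealInnerProductSpace

lemma exp54 : Real.exp (5/4) ≤ 3.5 := by
  have h1 : Real.exp 1 ≤ 2.7182818286 := Real.exp_one_lt_d9.le
  have h4 : Real.exp (5/4) ^ 4 = Real.exp 1 ^ 5 := by
    rw [← Real.exp_nat_mul, Real.exp_one_pow]
    norm_num
  have h5 : Real.exp (5/4) ^ 4 ≤ 3.5 ^ 4 := by
    rw [h4]
    calc Real.exp 1 ^ 5 ≤ 2.7182818286 ^ 5 := by gcongr
      _ ≤ 3.5 ^ 4 := by norm_num
  exact le_of_pow_le_pow_left₀ (by norm_num) (by norm_num) h5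

lemma keylog : ∀ y : ℝ, 1 ≤ y → y ≤ 3.5 → y - 1 ≤ 2 * Real.log y := by
  intro y h1 h2
  have hconc : ConcaveOn ℝ (Set.Ioi (0:ℝ)) (fun t => 2 * Real.log t - (t - 1)) := by
    have hl : ConcaveOn ℝ (Set.Ioi (0:ℝ)) (fun t => 2 * Real.log t) := by
      simpa [smul_eq_mul] using (strictConcaveOn_log_Ioi.concaveOn.smul (by norm_num : (0:ℝ) ≤ 2))
    have hc : ConvexOn ℝ (Set.Ioi (0:ℝ)) (fun t : ℝ => t - 1) := by
      exact (convexOn_id (convex_Ioi 0)).sub (concaveOn_const 1 (convex_Ioi 0))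
    exact hl.sub hc
  have hmem : y ∈ segment ℝ (1:ℝ) 3.5 := by
    rw [segment_eq_Icc (by norm_num : (1:ℝ) ≤ 3.5)]
    exact ⟨h1, h2⟩
  have := hconc.ge_on_segment (by norm_num : (1:ℝ) ∈ Set.Ioi 0)
    (by norm_num : (3.5:ℝ) ∈ Set.Ioi 0) hmem
  have hlog35 : (5/4:ℝ) ≤ Real.log 3.5 := by
    rw [Real.le_log_iff_exp_le (by norm_num)]
    exact exp54
  have h0 : (0:ℝ) ≤ 2 * Real.log y - (y - 1) :=
    le_trans (le_min (by simp) (by nlinarith)) this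
  linarith

lemma keyexp (y : ℝ) (h1 : 1 ≤ y) (h2 : y ≤ 3.5) : Real.exp (y - 1) ≤ y ^ 2 := by
  have hy0 : (0:ℝ) < y := by linarith
  have : y ^ 2 = Real.exp (2 * Real.log y) := by
    rw [mul_comm, Real.exp_mul, Real.exp_log hy0]
    norm_num
  rw [this, Real.exp_le_exp]
  exact keylog y h1 h2

lemma keyprod (n : ℕ) (hn : 0 < n) (y : Fin n → ℝ) (h1 : ∀ j, 1 ≤ y j) (h2 : ∀ j, y j ≤ 3.5) :
    ((∑ j, y j) / n) ^ n ≤ (∏ j, y j) ^ 2 := by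
  have hA : (n : ℝ) ≤ ∑ j, y j := by
    calc (n:ℝ) = ∑ _j : Fin n, (1:ℝ) := by simp
      _ ≤ ∑ j, y j := Finset.sum_le_sum fun j _ => h1 j
  have hn' : (0:ℝ) < n := Nat.cast_pos.mpr hn
  have hu : 1 ≤ (∑ j, y j) / n := (one_le_div hn').mpr hA
  calc ((∑ j, y j) / n) ^ n ≤ Real.exp ((∑ j, y j) / n - 1) ^ n := by
        gcongr
        all_goals linarith [Real.add_one_le_exp ((∑ j, y j) / n - 1)]
    _ = Real.exp (∑ j, (y j - 1)) := by
        rw [← Real.exp_nat_mul, Finset.sum_sub_distrib]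
        congr 1
        field_simp
        simp
    _ = ∏ j, Real.exp (y j - 1) := Real.exp_sum _ _
    _ ≤ ∏ j, (y j) ^ 2 := Finset.prod_le_prod (fun j _ => (Real.exp_pos _).le)
        (fun j _ => keyexp (y j) (h1 j) (h2 j))
    _ = (∏ j, y j) ^ 2 := by rw [Finset.prod_pow]

/-- If the unit vectors `a₁,…,aₙ` in a real Hilbert space satisfy `1 ≤ ⟨s,aⱼ⟩ ≤ 3.5`
for `s = a₁+⋯+aₙ`, then `s ≠ 0`, the vector `x = s/‖s‖` satisfies
`∏ⱼ |⟨x,aⱼ⟩| ≥ n^(-n/2)`, and hence the sup of `|⟨x,a₁⟩⋯⟨x,aₙ⟩|` over the closed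
unit ball is at least `n^(-n/2)`. -/
theorem stmt5 {H : Type*} [NormedAddCommGroup H] [InnerProductSpace ℝ H] [CompleteSpace H]
    (n : ℕ) (hn : 0 < n) (a : Fin n → H) (ha : ∀ j, ‖a j‖ = 1)
    (hy : ∀ j, 1 ≤ ⟪∑ i, a i, a j⟫ ∧ ⟪∑ i, a i, a j⟫ ≤ 3.5) :
    (∑ i, a i) ≠ 0 ∧
    (n : ℝ) ^ (-(n : ℝ) / 2) ≤ ∏ j, |⟪‖∑ i, a i‖⁻¹ • ∑ i, a i, a j⟫| ∧
    (n : ℝ) ^ (-(n : ℝ) / 2) ≤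
      sSup {r : ℝ | ∃ x : H, ‖x‖ ≤ 1 ∧ r = |∏ j, ⟪x, a j⟫|} := by
  set s : H := ∑ i, a i with hs_def
  have hs : s ≠ 0 := by
    intro h
    have h1 := (hy ⟨0, hn⟩).1
    rw [h, inner_zero_left] at h1
    norm_num at h1
  have hns : (0:ℝ) < ‖s‖ := norm_pos_iff.mpr hs
  set y : Fin n → ℝ := fun j => ⟪s, a j⟫ with hy_def
  have hy1 : ∀ j, 1 ≤ y j := fun j => (hy j).1
  have hy2 : ∀ j, y j ≤ 3.5 := fun j => (hy j).2
  have hsum : ‖s‖ ^ 2 = ∑ j, y j := by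
    rw [← real_inner_self_eq_norm_sq, hs_def]
    exact inner_sum _ _ _
  have hn' : (0:ℝ) < n := Nat.cast_pos.mpr hn
  have hsq : (0:ℝ) < Real.sqrt n := Real.sqrt_pos.mpr hn'
  -- key product bound
  have hP : (‖s‖ / Real.sqrt n) ^ n ≤ ∏ j, y j := by
    apply le_of_pow_le_pow_left₀ (two_ne_zero)
      (Finset.prod_nonneg fun j _ => by linarith [hy1 j])
    calc ((‖s‖ / Real.sqrt n) ^ n) ^ 2 = ((‖s‖ / Real.sqrt n) ^ 2) ^ n := by
          rw [← pow_mul, ← pow_mul, Nat.mul_comm]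
      _ = ((∑ j, y j) / n) ^ n := by
          rw [div_pow, Real.sq_sqrt hn'.le, hsum]
      _ ≤ (∏ j, y j) ^ 2 := keyprod n hn y hy1 hy2
  -- rewrite the rpow
  have hrpow : (n : ℝ) ^ (-(n : ℝ) / 2) = (Real.sqrt n)⁻¹ ^ n := by
    have h1 : (Real.sqrt n)⁻¹ = (n:ℝ) ^ (-(1/2) : ℝ) := by
      rw [Real.rpow_neg (Nat.cast_nonneg n), Real.sqrt_eq_rpow]
    rw [h1, ← Real.rpow_natCast ((n:ℝ) ^ (-(1/2):ℝ)) n, ← Real.rpow_mul (Nat.cast_nonneg n)]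
    congr 1
    ring
  have hinner : ∀ j, |⟪‖s‖⁻¹ • s, a j⟫| = ‖s‖⁻¹ * y j := by
    intro j
    rw [real_inner_smul_left]
    exact abs_of_nonneg (mul_nonneg (inv_nonneg.mpr hns.le) (by linarith [hy1 j]))
  have hgoal2 : (n : ℝ) ^ (-(n : ℝ) / 2) ≤ ∏ j, |⟪‖s‖⁻¹ • s, a j⟫| := by
    rw [hrpow]
    calc (Real.sqrt n)⁻¹ ^ n = ‖s‖⁻¹ ^ n * (‖s‖ / Real.sqrt n) ^ n := by
          rw [← mul_pow]
          congr 1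
          field_simp
      _ ≤ ‖s‖⁻¹ ^ n * ∏ j, y j := by
          gcongr
      _ = ∏ j, ‖s‖⁻¹ * y j := by
          rw [Finset.prod_mul_distrib, Finset.prod_const, Finset.card_univ, Fintype.card_fin]
      _ = ∏ j, |⟪‖s‖⁻¹ • s, a j⟫| := by
          exact (Finset.prod_congr rfl fun j _ => (hinner j).symm)
  refine ⟨hs, hgoal2, ?_⟩
  -- third goal
  have hxnorm : ‖(‖s‖⁻¹ • s : H)‖ ≤ 1 := by
    rw [norm_smul, norm_inv, norm_norm, inv_mul_cancel₀ hns.ne']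
  have hmem : |∏ j, ⟪(‖s‖⁻¹ • s : H), a j⟫| ∈
      {r : ℝ | ∃ x : H, ‖x‖ ≤ 1 ∧ r = |∏ j, ⟪x, a j⟫|} :=
    ⟨‖s‖⁻¹ • s, hxnorm, rfl⟩
  have hbdd : BddAbove {r : ℝ | ∃ x : H, ‖x‖ ≤ 1 ∧ r = |∏ j, ⟪x, a j⟫|} := by
    refine ⟨1, fun r hr => ?_⟩
    obtain ⟨x, hx, rfl⟩ := hr
    rw [Finset.abs_prod]
    calc ∏ j, |⟪x, a j⟫| ≤ ∏ _j : Fin n, (1:ℝ) :=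
          Finset.prod_le_prod (fun j _ => abs_nonneg _)
            (fun j _ => by
              calc |⟪x, a j⟫| ≤ ‖x‖ * ‖a j‖ := abs_real_inner_le_norm _ _
                _ ≤ 1 := by rw [ha j, mul_one]; exact hx)
      _ = 1 := by simp
  calc (n : ℝ) ^ (-(n : ℝ) / 2) ≤ ∏ j, |⟪‖s‖⁻¹ • s, a j⟫| := hgoal2
    _ = |∏ j, ⟪(‖s‖⁻¹ • s : H), a j⟫| := (Finset.abs_prod _ _).symm
    _ ≤ sSup {r : ℝ | ∃ x : H, ‖x‖ ≤ 1 ∧ r = |∏ j, ⟪x, a j⟫|} := le_csSup hbdd hmem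
end

section
/- Let a₁,…,aₙ be unit vectors in a real Hilbert space, set s = a₁+⋯+aₙ and yⱼ = ⟨s, aⱼ⟩. Assume 1 ≤ yⱼ ≤ 3.5 for every j = 1,…,n, and that yⱼ > 1 for at least one j (equivalently, the system a₁,…,aₙ is not orthonormal). Then the vector x = s/‖s‖ satisfies the strict inequality ∏_{j=1}^{n} |⟨x, aⱼ⟩| > n^{−n/2}. -/
/-!
With `s = ∑ aᵢ` and `yⱼ = ⟪s, aⱼ⟫` one has `‖s‖² = ∑ yⱼ`, so the claim amounts to
`(∑ yⱼ / n)ⁿ < ∏ yⱼ²`. Since `t ≤ exp (t - 1)`, the left side is at most `∏ exp (yⱼ - 1)`,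
and `exp (y - 1) ≤ y²` on `[1, 3.5]`, strictly for `y > 1`: the chord of the concave `log`
over `[1, 3.5]` has slope `log 3.5 / 2.5 > 1 / 2`.
-/

open Real Finset
open scoped RealInnerProductSpace

namespace Real

lemma five_quarters_lt_log_three_point_five : 5 / 4 < log 3.5 := by
  rw [lt_log_iff_exp_lt (by norm_num)]
  refine lt_of_pow_lt_pow_left₀ 4 (by norm_num) ?_
  calc exp (5 / 4) ^ 4 = exp 1 ^ 5 := by rw [← exp_nat_mul, ← exp_nat_mul]; norm_num
    _ < 2.7182818286 ^ 5 := by gcongr; exact exp_one_lt_d9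
    _ < 3.5 ^ 4 := by norm_num

lemma sub_one_mul_log_le_sub_one_mul_log {b y : ℝ} (hb : 1 < b) (hy₁ : 1 ≤ y) (hyb : y ≤ b) :
    (y - 1) * log b ≤ (b - 1) * log y := by
  have hb₁ : 0 < b - 1 := sub_pos.2 hb
  have hconc := strictConcaveOn_log_Ioi.concaveOn.2 (Set.mem_Ioi.mpr one_pos)
    (Set.mem_Ioi.mpr (one_pos.trans hb)) (div_nonneg (sub_nonneg.2 hyb) hb₁.le)
    (div_nonneg (sub_nonneg.2 hy₁) hb₁.le) (by field_simp; ring)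
  have hy : ((b - y) / (b - 1)) • (1 : ℝ) + ((y - 1) / (b - 1)) • b = y := by
    simp only [smul_eq_mul]; field_simp; ring
  rw [hy, smul_eq_mul, smul_eq_mul, log_one, mul_zero, zero_add, div_mul_eq_mul_div,
    div_le_iff₀ hb₁] at hconc
  linarith

lemma exp_sub_one_le_sq {y : ℝ} (hy₁ : 1 ≤ y) (hy₂ : y ≤ 3.5) : exp (y - 1) ≤ y ^ 2 := by
  have hchord := sub_one_mul_log_le_sub_one_mul_log (by norm_num) hy₁ hy₂
  rw [← le_log_iff_exp_le (by positivity), log_pow, Nat.cast_ofNat]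
  nlinarith [mul_le_mul_of_nonneg_left five_quarters_lt_log_three_point_five.le
    (sub_nonneg.2 hy₁)]

lemma exp_sub_one_lt_sq {y : ℝ} (hy₁ : 1 < y) (hy₂ : y ≤ 3.5) : exp (y - 1) < y ^ 2 := by
  have hchord := sub_one_mul_log_le_sub_one_mul_log (by norm_num) hy₁.le hy₂
  rw [← lt_log_iff_exp_lt (by positivity), log_pow, Nat.cast_ofNat]
  nlinarith [mul_lt_mul_of_pos_left five_quarters_lt_log_three_point_five (sub_pos.2 hy₁)]

end Real

lemma pow_card_mean_le_prod_exp_sub_one {ι : Type*} (s : Finset ι) {y : ι → ℝ}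
    (hy : ∀ i ∈ s, 0 ≤ y i) : ((∑ i ∈ s, y i) / #s) ^ #s ≤ ∏ i ∈ s, exp (y i - 1) := by
  rcases s.eq_empty_or_nonempty with rfl | hs
  · simp
  have hcard : (#s : ℝ) ≠ 0 := Nat.cast_ne_zero.2 hs.card_ne_zero
  have hexp : ∏ i ∈ s, exp (y i - 1) = exp ((∑ i ∈ s, y i) / #s - 1) ^ #s := by
    rw [← exp_sum, ← exp_nat_mul, sum_sub_distrib, sum_const, nsmul_one]
    field_simp
  rw [hexp]
  exact pow_le_pow_left₀ (div_nonneg (sum_nonneg hy) (Nat.cast_nonneg _))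
    (by linarith [add_one_le_exp ((∑ i ∈ s, y i) / #s - 1)]) _

lemma pow_card_mean_lt_prod_sq {ι : Type*} (s : Finset ι) {y : ι → ℝ}
    (hy : ∀ i ∈ s, 1 ≤ y i ∧ y i ≤ 3.5) (hlt : ∃ i ∈ s, 1 < y i) :
    ((∑ i ∈ s, y i) / #s) ^ #s < ∏ i ∈ s, y i ^ 2 := by
  obtain ⟨i₀, hi₀, hlt₀⟩ := hlt
  calc ((∑ i ∈ s, y i) / #s) ^ #s
      ≤ ∏ i ∈ s, exp (y i - 1) :=
        pow_card_mean_le_prod_exp_sub_one s fun i hi => zero_le_one.trans (hy i hi).1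
    _ < ∏ i ∈ s, y i ^ 2 :=
        prod_lt_prod (fun i _ => exp_pos _) (fun i hi => exp_sub_one_le_sq (hy i hi).1 (hy i hi).2)
          ⟨i₀, hi₀, exp_sub_one_lt_sq hlt₀ (hy i₀ hi₀).2⟩

lemma rpow_neg_half_lt_div_sqrt_pow {n : ℕ} {S P : ℝ} (hS : 0 < S) (hP : 0 ≤ P)
    (h : (S / n) ^ n < P ^ 2) : (n : ℝ) ^ (-(n : ℝ) / 2) < P / √S ^ n := by
  refine lt_of_pow_lt_pow_left₀ 2 (by positivity) ?_
  have hlhs : ((n : ℝ) ^ (-(n : ℝ) / 2)) ^ 2 = ((n : ℝ) ^ n)⁻¹ := by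
    rw [← rpow_mul_natCast (Nat.cast_nonneg n), ← rpow_natCast,
      ← rpow_neg (Nat.cast_nonneg n)]
    norm_num
  have hrhs : (P / √S ^ n) ^ 2 = P ^ 2 / S ^ n := by
    rw [div_pow, ← pow_mul, mul_comm, pow_mul, sq_sqrt hS.le]
  rwa [hlhs, hrhs, lt_div_iff₀ (pow_pos hS n), inv_mul_eq_div, ← div_pow]

section InnerProductSpace

variable {ι H : Type*} [NormedAddCommGroup H] [InnerProductSpace ℝ H]

lemma norm_sum_sq_eq_sum_inner (s : Finset ι) (a : ι → H) :
    ‖∑ i ∈ s, a i‖ ^ 2 = ∑ j ∈ s, ⟪∑ i ∈ s, a i, a j⟫ := by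
  rw [← real_inner_self_eq_norm_sq, inner_sum]

lemma prod_abs_inner_inv_norm_smul (s : Finset ι) (x : H) (a : ι → H) :
    ∏ j ∈ s, |⟪‖x‖⁻¹ • x, a j⟫| = (∏ j ∈ s, |⟪x, a j⟫|) / ‖x‖ ^ #s := by
  simp only [real_inner_smul_left, abs_mul, abs_inv, abs_norm, prod_mul_distrib, prod_const,
    inv_pow, div_eq_inv_mul]

end InnerProductSpace

theorem stmt6_general {H : Type*} [NormedAddCommGroup H] [InnerProductSpace ℝ H]
    (n : ℕ) (a : Fin n → H)
    (hy : ∀ j, 1 ≤ ⟪∑ i, a i, a j⟫ ∧ ⟪∑ i, a i, a j⟫ ≤ 3.5)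
    (hstrict : ∃ j, 1 < ⟪∑ i, a i, a j⟫) :
    (n : ℝ) ^ (-(n : ℝ) / 2) < ∏ j, |⟪‖∑ i, a i‖⁻¹ • ∑ i, a i, a j⟫| := by
  obtain ⟨j₀, hj₀⟩ := hstrict
  set s := ∑ i, a i
  have hnorm : ‖s‖ = √(∑ j, ⟪s, a j⟫) := by
    rw [← norm_sum_sq_eq_sum_inner, sqrt_sq (norm_nonneg _)]
  have hmean := pow_card_mean_lt_prod_sq univ (fun j _ => hy j) ⟨j₀, mem_univ _, hj₀⟩
  rw [card_univ, Fintype.card_fin] at hmean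
  rw [prod_abs_inner_inv_norm_smul, card_univ, Fintype.card_fin, hnorm]
  refine rpow_neg_half_lt_div_sqrt_pow
    (sum_pos (fun j _ => one_pos.trans_le (hy j).1) ⟨j₀, mem_univ _⟩)
    (by positivity) ?_
  simpa only [← prod_pow, sq_abs] using hmean

/-- If the unit vectors `a₁,…,aₙ` in a real Hilbert space satisfy `1 ≤ ⟨s,aⱼ⟩ ≤ 3.5`
for `s = a₁+⋯+aₙ`, and `⟨s,aⱼ⟩ > 1` for some `j` (the system is not orthonormal),
then `x = s/‖s‖` satisfies the strict inequality `∏ⱼ |⟨x,aⱼ⟩| > n^(-n/2)`. -/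
theorem stmt6 {H : Type*} [NormedAddCommGroup H] [InnerProductSpace ℝ H] [CompleteSpace H]
    (n : ℕ) (a : Fin n → H) (ha : ∀ j, ‖a j‖ = 1)
    (hy : ∀ j, 1 ≤ ⟪∑ i, a i, a j⟫ ∧ ⟪∑ i, a i, a j⟫ ≤ 3.5)
    (hstrict : ∃ j, 1 < ⟪∑ i, a i, a j⟫) :
    (n : ℝ) ^ (-(n : ℝ) / 2) < ∏ j, |⟪‖∑ i, a i‖⁻¹ • ∑ i, a i, a j⟫| :=
  stmt6_general n a hy hstrict
end

section
/- Let n ∈ ℕ and let t₁,…,tₙ be real numbers with 0 ≤ tᵢ ≤ 2.5 for all i. Then (1+t₁)²(1+t₂)²⋯(1+tₙ)² ≥ (1 + (t₁+t₂+⋯+tₙ)/n)ⁿ. Moreover, if tᵢ > 0 for some i, the inequality is strict. -/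
/-!
Since `(1 + S/n)ⁿ ≤ exp S = ∏ exp tᵢ`, it suffices that `exp t ≤ (1 + t)²`, i.e. `t/2 ≤ log (1 + t)`,
for `0 ≤ t ≤ 5/2`, strictly for `t > 0`. By concavity of `log`, `log (1 + t)` lies above the chord
`(2t/5) log (7/2)` on `[0, 5/2]`, and `log (7/2) > 5/4` because `exp 5 < (7/2)⁴`.
-/

open Real Finset

lemma exp_five_fourths_lt : exp (5 / 4) < 7 / 2 := by
  have h5 : exp 5 < (7 / 2) ^ 4 :=
    calc exp 5 = exp 1 ^ 5 := by rw [← exp_nat_mul]; norm_num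
      _ < 2.7182818286 ^ 5 := by gcongr; exact exp_one_lt_d9
      _ < (7 / 2) ^ 4 := by norm_num
  have h4 : exp (5 / 4) ^ 4 = exp 5 := by rw [← exp_nat_mul]; norm_num
  exact lt_of_pow_lt_pow_left₀ 4 (by norm_num) (h4 ▸ h5)

lemma half_lt_log_one_add {t : ℝ} (h0 : 0 < t) (h1 : t ≤ 5 / 2) : t / 2 < log (1 + t) := by
  have hlog : 5 / 4 < log (7 / 2) := (lt_log_iff_exp_lt (by norm_num)).2 exp_five_fourths_lt
  have hchord : (1 - 2 * t / 5) * log 1 + 2 * t / 5 * log (7 / 2) ≤ log (1 + t) := by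
    have := strictConcaveOn_log_Ioi.concaveOn.2 (Set.mem_Ioi.2 one_pos)
      (Set.mem_Ioi.2 (by norm_num : (0 : ℝ) < 7 / 2))
      (by linarith : 0 ≤ 1 - 2 * t / 5) (by positivity : 0 ≤ 2 * t / 5) (by ring)
    rwa [smul_eq_mul, smul_eq_mul, smul_eq_mul, smul_eq_mul,
      show (1 - 2 * t / 5) * 1 + 2 * t / 5 * (7 / 2) = 1 + t by ring] at this
  rw [log_one, mul_zero, zero_add] at hchord
  linarith [mul_lt_mul_of_pos_left hlog (by positivity : 0 < 2 * t / 5)]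

lemma exp_lt_one_add_sq {t : ℝ} (h0 : 0 < t) (h1 : t ≤ 5 / 2) : exp t < (1 + t) ^ 2 := by
  calc exp t < exp (2 * log (1 + t)) := exp_lt_exp.2 (by linarith [half_lt_log_one_add h0 h1])
    _ = (1 + t) ^ 2 := by rw [← exp_log (by positivity : 0 < (1 + t) ^ 2), log_pow]; norm_num

lemma exp_le_one_add_sq {t : ℝ} (h0 : 0 ≤ t) (h1 : t ≤ 5 / 2) : exp t ≤ (1 + t) ^ 2 := by
  rcases h0.eq_or_lt with rfl | hpos
  · norm_num
  · exact (exp_lt_one_add_sq hpos h1).le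

lemma one_add_div_pow_le_exp {n : ℕ} {x : ℝ} (hx : -n ≤ x) : (1 + x / n) ^ n ≤ exp x := by
  simpa [sub_eq_add_neg, neg_div] using one_sub_div_pow_le_exp_neg (t := -x) (by linarith)

theorem stmt7_general (n : ℕ) (t : Fin n → ℝ)
    (ht : ∀ i, 0 ≤ t i ∧ t i ≤ 2.5) :
    (1 + (∑ i, t i) / n) ^ n ≤ ∏ i, (1 + t i) ^ 2 ∧
    ((∃ i, 0 < t i) → (1 + (∑ i, t i) / n) ^ n < ∏ i, (1 + t i) ^ 2) := by
  have ht' : ∀ i, 0 ≤ t i ∧ t i ≤ 5 / 2 := fun i => ⟨(ht i).1, by linarith [(ht i).2]⟩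
  have hexp : (1 + (∑ i, t i) / n) ^ n ≤ ∏ i, exp (t i) := by
    rw [← exp_sum]
    refine one_add_div_pow_le_exp ?_
    linarith [n.cast_nonneg (α := ℝ), sum_nonneg fun i (_ : i ∈ univ) => (ht' i).1]
  refine ⟨hexp.trans (prod_le_prod (fun i _ => (exp_pos _).le)
    fun i _ => exp_le_one_add_sq (ht' i).1 (ht' i).2), ?_⟩
  rintro ⟨j, hj⟩
  exact hexp.trans_lt (prod_lt_prod (fun i _ => exp_pos _)
    (fun i _ => exp_le_one_add_sq (ht' i).1 (ht' i).2) ⟨j, mem_univ j, exp_lt_one_add_sq hj (ht' j).2⟩)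

/-- For reals `0 ≤ tᵢ ≤ 2.5`, `(1+t₁)²⋯(1+tₙ)² ≥ (1 + (t₁+⋯+tₙ)/n)ⁿ`, with strict
inequality if some `tᵢ > 0`. -/
theorem stmt7 (n : ℕ) (hn : 0 < n) (t : Fin n → ℝ)
    (ht : ∀ i, 0 ≤ t i ∧ t i ≤ 2.5) :
    (1 + (∑ i, t i) / n) ^ n ≤ ∏ i, (1 + t i) ^ 2 ∧
    ((∃ i, 0 < t i) → (1 + (∑ i, t i) / n) ^ n < ∏ i, (1 + t i) ^ 2) :=
  stmt7_general n t ht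
end

section
/- For every n ≥ 34 there exist unit vectors a₁,…,aₙ in ℝⁿ such that the choice of signs ε = (1,…,1) maximizes ‖Σⱼ εⱼaⱼ‖ over all ε ∈ {−1,1}ⁿ, and yet the normalized mean vector x = (a₁+⋯+aₙ)/‖a₁+⋯+aₙ‖ satisfies ∏_{j=1}^{n} |⟨x, aⱼ⟩| < n^{−n/2}. -/
open scoped RealInnerProductSpace

section PappasRevesz

open Finset

private lemma keyIneqPR (n : ℕ) (hn : 34 ≤ n) : (6:ℝ)^12 * (n:ℝ)^n < ((n:ℝ)+30)^n := by
  induction n with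
  | zero => omega
  | succ m IH =>
    rcases eq_or_lt_of_le hn with h | h
    · have hm : m = 33 := by omega
      subst hm
      norm_num
    · have hm : 34 ≤ m := by omega
      have IH' := IH hm
      set N : ℝ := (m : ℝ) with hN
      have hN34 : (34:ℝ) ≤ N := by rw [hN]; exact_mod_cast hm
      have hNpos : (0:ℝ) < N := by linarith
      -- Bernoulli step
      set a : ℝ := -30 / ((N+1)*(N+30)) with ha
      have hden : (0:ℝ) < (N+1)*(N+30) := by positivity
      have h2 : (-2:ℝ) ≤ a := by
        rw [ha, neg_div, neg_le_neg_iff, div_le_iff₀ hden]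
        nlinarith
      have hB := one_add_mul_le_pow h2 (m+1)
      have e1 : 1 + (m+1 : ℕ) * a = N/(N+30) := by
        push_cast
        rw [ha]
        field_simp
        ring
      have e2 : 1 + a = (N*(N+31))/((N+1)*(N+30)) := by
        rw [ha]; field_simp; ring
      rw [e1, e2, div_pow] at hB
      rw [div_le_div_iff₀ (by linarith) (by positivity)] at hB
      -- hB : N * ((N+1)*(N+30))^(m+1) ≤ (N*(N+31))^(m+1) * (N+30)
      have key2 : (N+30)^m * (N+1)^(m+1) ≤ N^m * (N+31)^(m+1) := by
        have h3 : (0:ℝ) < N * (N+30) := by positivity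
        rw [← mul_le_mul_iff_of_pos_right h3]
        calc (N+30)^m * (N+1)^(m+1) * (N*(N+30))
            = N * ((N+1)*(N+30))^(m+1) := by rw [mul_pow]; ring
          _ ≤ (N*(N+31))^(m+1) * (N+30) := hB
          _ = N^m * (N+31)^(m+1) * (N*(N+30)) := by rw [mul_pow]; ring
      -- combine
      have hNn : (0:ℝ) < N^m := by positivity
      push_cast
      have hc : ((m:ℝ)) + 1 + 30 = N + 31 := by rw [hN]; ring
      rw [hc]
      calc (6:ℝ)^12 * (N+1)^(m+1)
          = ((6:ℝ)^12 * N^m) * (N+1)^(m+1) / N^m := by field_simp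
        _ < ((N+30)^m) * (N+1)^(m+1) / N^m := by
            apply div_lt_div_of_pos_right ?_ hNn
            have hp : (0:ℝ) < (N+1)^(m+1) := by positivity
            exact (mul_lt_mul_iff_of_pos_right hp).mpr IH'
        _ ≤ (N+31)^(m+1) := by
            rw [div_le_iff₀ hNn]
            calc (N+30)^m * (N+1)^(m+1) ≤ N^m * (N+31)^(m+1) := key2
              _ = (N+31)^(m+1) * N^m := by ring

private lemma keyIneqPR2 (n : ℕ) (hn : 34 ≤ n) :
    (6:ℝ)^6 * (Real.sqrt n)^n < (Real.sqrt ((n:ℝ)+30))^n := by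
  have key := keyIneqPR n hn

  have hn0 : (0:ℝ) ≤ (n:ℝ) := Nat.cast_nonneg n
  have e : ((Real.sqrt n)^n)^2 = (n:ℝ)^n := by
    rw [← pow_mul', pow_mul, Real.sq_sqrt hn0]
  have h1 : ((6:ℝ)^6 * (Real.sqrt n)^n)^2 = 6^12 * (n:ℝ)^n := by
    rw [mul_pow, e]
    norm_num
  have h2 : ((Real.sqrt ((n:ℝ)+30))^n)^2 = ((n:ℝ)+30)^n := by
    rw [← pow_mul', pow_mul, Real.sq_sqrt (by linarith)]
  apply lt_of_pow_lt_pow_left₀ 2 (by positivity)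
  rw [h1, h2]
  exact key


private lemma rpowEqPR (n : ℕ) : (n:ℝ) ^ (-(n:ℝ)/2) = ((Real.sqrt n)^n)⁻¹ := by
  have hn0 : (0:ℝ) ≤ (n:ℝ) := Nat.cast_nonneg n
  rw [Real.sqrt_eq_rpow, ← Real.rpow_natCast ((n:ℝ) ^ ((1:ℝ)/2)) n, ← Real.rpow_mul hn0,
    ← Real.rpow_neg_one (((n:ℝ)) ^ (1/2 * (n:ℝ))), ← Real.rpow_mul hn0]
  congr 1
  ring

end PappasRevesz

/-- Negative answer to the Pappas–Révész question: for every `n ≥ 34` there exist unit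
vectors `a₁,…,aₙ` in `ℝⁿ` for which the all-`+1` sign choice maximizes the length of the
signed sum, yet the normalized mean vector `x` satisfies `∏ⱼ |⟨x,aⱼ⟩| < n^(-n/2)`. -/
theorem stmt10 (n : ℕ) (hn : 34 ≤ n) :
    ∃ a : Fin n → EuclideanSpace ℝ (Fin n),
      (∀ j, ‖a j‖ = 1) ∧
      (∀ ε : Fin n → ℝ, (∀ j, ε j = 1 ∨ ε j = -1) →
        ‖∑ j, ε j • a j‖ ≤ ‖∑ j, a j‖) ∧
      ∏ j, |⟪(‖∑ i, a i‖⁻¹ • ∑ i, a i : EuclideanSpace ℝ (Fin n)), a j⟫| <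
        (n : ℝ) ^ (-(n : ℝ) / 2) := by
  have h6n : 6 < n := by omega
  set z : Fin n := ⟨0, by omega⟩ with hz
  set f : Fin n → Fin n := fun j => if (j:ℕ) < 6 then z else j with hf
  set a : Fin n → EuclideanSpace ℝ (Fin n) := fun j => EuclideanSpace.single (f j) 1 with hadef
  set T : Finset (Fin n) := Finset.univ.filter (fun j : Fin n => (j:ℕ) < 6) with hT
  have hmemT : ∀ j : Fin n, j ∈ T ↔ (j:ℕ) < 6 := by intro j; simp [hT]
  have hfT : ∀ j ∈ T, f j = z := by intro j hj; simp [hf, (hmemT j).mp hj]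
  have hfT' : ∀ j ∉ T, f j = j := by
    intro j hj; simp [hf]; intro hc; exact absurd ((hmemT j).mpr hc) hj
  have hzT : z ∈ T := (hmemT z).mpr (by simp [hz])
  have hfz : ∀ j ∉ T, f j ≠ z := by
    intro j hj hc
    rw [hfT' j hj] at hc
    exact hj (hc ▸ hzT)
  have hTcard : T.card = 6 := by
    have himg : T.image Fin.val = Finset.range 6 := by
      ext k
      simp only [Finset.mem_image, Finset.mem_range, hT, Finset.mem_filter, Finset.mem_univ,
        true_and]
      constructor
      · rintro ⟨j, hj, rfl⟩; exact hj
      · intro hk; exact ⟨⟨k, by omega⟩, hk, rfl⟩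
    have := Finset.card_image_of_injective T (Fin.val_injective)
    rw [himg, Finset.card_range] at this
    omega
  have hTccard : Tᶜ.card = n - 6 := by
    have := Finset.card_compl T
    simp [hTcard] at this
    simpa using this
  -- norm-square formula
  have hns : ∀ ε : Fin n → ℝ,
      ‖∑ j, ε j • a j‖^2 = (∑ j ∈ T, ε j)^2 + ∑ j ∈ Tᶜ, (ε j)^2 := by
    intro ε
    set c : Fin n → ℝ := fun k => if k ∈ T then (if k = z then ∑ j ∈ T, ε j else 0) else ε k
      with hc
    have hrepr : ∑ j, ε j • a j = ∑ k, c k • EuclideanSpace.single k (1:ℝ) := by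
      rw [← Finset.sum_add_sum_compl T, ← Finset.sum_add_sum_compl T (fun k => c k • _)]
      congr 1
      · have h1 : ∑ j ∈ T, ε j • a j = (∑ j ∈ T, ε j) • EuclideanSpace.single z (1:ℝ) := by
          rw [Finset.sum_smul]
          apply Finset.sum_congr rfl
          intro j hj
          rw [hadef]
          simp only []
          rw [hfT j hj]
        rw [h1]
        have h2 : ∑ k ∈ T, c k • EuclideanSpace.single k (1:ℝ)
            = c z • EuclideanSpace.single z (1:ℝ) :=
          Finset.sum_eq_single z (fun k hk hkz => by simp [hc, hk, hkz])
            (fun hzz => absurd hzT hzz)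
        rw [h2]
        simp [hc, hzT]
      · apply Finset.sum_congr rfl
        intro j hj
        rw [Finset.mem_compl] at hj
        simp only [hc, hadef, if_neg hj]
        rw [hfT' j hj]
    rw [hrepr]
    have horth := EuclideanSpace.orthonormal_single (𝕜 := ℝ) (ι := Fin n)
    have hinner := horth.inner_sum c c Finset.univ
    rw [← real_inner_self_eq_norm_sq]
    rw [hinner]
    simp only [RCLike.inner_apply, starRingEnd_apply, star_trivial]
    rw [← Finset.sum_add_sum_compl T (fun k => c k * c k)]
    congr 1
    · have h2 : ∑ k ∈ T, c k * c k = c z * c z :=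
        Finset.sum_eq_single z (fun k hk hkz => by simp [hc, hk, hkz])
          (fun hzz => absurd hzT hzz)
      rw [h2]
      simp [hc, hzT, sq]
    · apply Finset.sum_congr rfl
      intro k hk
      rw [Finset.mem_compl] at hk
      simp [hc, hk, sq]
  -- the sum S
  set S : EuclideanSpace ℝ (Fin n) := ∑ i, a i with hS
  have hSone : S = ∑ j, (1:ℝ) • a j := by simp [hS]
  have hSnormsq : ‖S‖^2 = (n:ℝ) + 30 := by
    rw [hSone, hns]
    simp [hTcard, hTccard]
    push_cast [Nat.cast_sub (by omega : 6 ≤ n)]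
    ring
  have hSpos : 0 < ‖S‖ := by
    have h0 : ‖S‖ ≠ 0 := by
      intro h
      rw [h] at hSnormsq
      have : (0:ℝ) ≤ (n:ℝ) := Nat.cast_nonneg n
      norm_num at hSnormsq
      linarith
    exact lt_of_le_of_ne (norm_nonneg S) (Ne.symm h0)
  -- maximality
  have hmax : ∀ ε : Fin n → ℝ, (∀ j, ε j = 1 ∨ ε j = -1) →
      ‖∑ j, ε j • a j‖ ≤ ‖S‖ := by
    intro ε hε
    have habs : ∀ j, |ε j| = 1 := by
      intro j; rcases hε j with h | h <;> simp [h]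
    have h1 : ‖∑ j, ε j • a j‖^2 ≤ ‖S‖^2 := by
      rw [hns, hSnormsq]
      have hb : (∑ j ∈ T, ε j)^2 ≤ 36 := by
        have : |∑ j ∈ T, ε j| ≤ 6 := by
          calc |∑ j ∈ T, ε j| ≤ ∑ j ∈ T, |ε j| := Finset.abs_sum_le_sum_abs _ _
            _ = 6 := by simp [habs, hTcard]
        nlinarith [this, abs_nonneg (∑ j ∈ T, ε j), sq_abs (∑ j ∈ T, ε j)]
      have hrest : ∑ j ∈ Tᶜ, (ε j)^2 = (n:ℝ) - 6 := by
        have : ∀ j ∈ Tᶜ, (ε j)^2 = 1 := by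
          intro j _; rcases hε j with h | h <;> simp [h]
        rw [Finset.sum_congr rfl this]
        simp [hTccard]
        push_cast [Nat.cast_sub (by omega : 6 ≤ n)]
        ring
      rw [hrest]; linarith
    nlinarith [norm_nonneg (∑ j, ε j • a j), norm_nonneg S, h1]
  -- inner products with S
  have hinnerS : ∀ j, ⟪S, a j⟫ = if j ∈ T then (6:ℝ) else 1 := by
    intro j
    have h1 : ⟪S, a j⟫ = ∑ i, (if f i = f j then (1:ℝ) else 0) := by
      rw [hS, sum_inner]
      apply Finset.sum_congr rfl
      intro i _
      simp only [hadef, EuclideanSpace.inner_single_left, EuclideanSpace.single_apply]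
      simp
    rw [h1]
    by_cases hj : j ∈ T
    · rw [if_pos hj]
      have : ∀ i : Fin n, (f i = f j) ↔ i ∈ T := by
        intro i
        rw [hfT j hj]
        constructor
        · intro hi
          by_contra hiT
          exact hfz i hiT hi
        · intro hi; exact hfT i hi
      rw [Finset.sum_congr rfl (fun i _ => by rw [if_congr (this i) rfl rfl])]
      rw [Finset.sum_ite_mem]
      simp [hTcard]
    · rw [if_neg hj]
      have : ∀ i : Fin n, (f i = f j) ↔ i = j := by
        intro i
        rw [hfT' j hj]
        constructor
        · intro hi
          by_cases hiT : i ∈ T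
          · exfalso
            rw [hfT i hiT] at hi
            exact hj (hi ▸ hzT)
          · rwa [hfT' i hiT] at hi
        · rintro rfl; exact hfT' i hj
      rw [Finset.sum_congr rfl (fun i _ => by rw [if_congr (this i) rfl rfl])]
      simp
  -- the product
  have hprod : ∏ j, |⟪(‖S‖⁻¹ • S : EuclideanSpace ℝ (Fin n)), a j⟫|
      = 6^6 * (‖S‖⁻¹)^n := by
    have h1 : ∀ j, |⟪(‖S‖⁻¹ • S : EuclideanSpace ℝ (Fin n)), a j⟫|
        = ‖S‖⁻¹ * |⟪S, a j⟫| := by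
      intro j
      rw [real_inner_smul_left, abs_mul, abs_of_nonneg (by positivity : (0:ℝ) ≤ ‖S‖⁻¹)]
    rw [Finset.prod_congr rfl (fun j _ => h1 j), Finset.prod_mul_distrib]
    rw [Finset.prod_const, Finset.card_univ, Fintype.card_fin]
    rw [mul_comm]
    congr 1
    have h2 : ∀ j : Fin n, |⟪S, a j⟫| = if j ∈ T then (6:ℝ) else 1 := by
      intro j
      rw [hinnerS j]
      split <;> norm_num
    rw [Finset.prod_congr rfl (fun j _ => h2 j), Finset.prod_ite_mem, Finset.prod_const,
      Finset.univ_inter, hTcard]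
  have hSn : ‖S‖ = Real.sqrt ((n:ℝ)+30) := by
    rw [← hSnormsq, Real.sqrt_sq (norm_nonneg S)]
  refine ⟨a, ?_, ?_, ?_⟩
  · intro j
    simp [hadef]
  · intro ε hε
    exact hmax ε hε
  · rw [← hS, hprod, rpowEqPR n, hSn, inv_pow]
    have hn0' : (0:ℝ) < (n:ℝ) := by
      have : 0 < n := by omega
      exact_mod_cast this
    have hA : 0 < (Real.sqrt ((n:ℝ)+30))^n := pow_pos (Real.sqrt_pos.mpr (by linarith)) n
    have hB : 0 < (Real.sqrt (n:ℝ))^n := pow_pos (Real.sqrt_pos.mpr hn0') n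
    rw [← div_eq_mul_inv, ← one_div, div_lt_div_iff₀ hA hB, one_mul]
    exact keyIneqPR2 n hn
end

section
/- Let n ≥ 7, let e₁,…,eₙ be the canonical basis of ℝⁿ, let b = (1/√6, 1/√6, 1/√6, 1/√6, 1/√6, 1/√6, 0, …, 0) ∈ ℝⁿ, and set aⱼ = b for 1 ≤ j ≤ 6 and aⱼ = eⱼ for 6 < j ≤ n. Consider the sign choice ε = (1,1,1,1,−1,−1,1,…,1), which gives a_ε = 2b + Σ_{j=7}^{n} eⱼ. Then the normalized vector x = a_ε/‖a_ε‖ satisfies ∏_{j=1}^{n} |⟨x, aⱼ⟩| = 2⁶/(n−2)^{n/2} ≥ n^{−n/2}. -/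
open scoped RealInnerProductSpace

/-- In the example with `aⱼ = b` (`j ≤ 6`) and `aⱼ = eⱼ` (`j > 6`), the sign choice
`ε = (1,1,1,1,−1,−1,1,…,1)` gives `a_ε = 2b + Σ_{j>6} eⱼ`, and the normalized vector
`x = a_ε/‖a_ε‖` satisfies `∏ⱼ |⟨x,aⱼ⟩| = 2⁶/(n−2)^(n/2) ≥ n^(-n/2)`. -/
theorem stmt13 (n : ℕ) (hn : 7 ≤ n)
    (b : EuclideanSpace ℝ (Fin n))
    (hb : ∀ i : Fin n, b i = if (i : ℕ) < 6 then (Real.sqrt 6)⁻¹ else 0)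
    (a : Fin n → EuclideanSpace ℝ (Fin n))
    (ha : ∀ j : Fin n, a j = if (j : ℕ) < 6 then b else EuclideanSpace.single j 1)
    (ε : Fin n → ℝ)
    (hε : ∀ j : Fin n, ε j = if (j : ℕ) = 4 ∨ (j : ℕ) = 5 then -1 else 1) :
    ∏ j, |⟪(‖∑ i, ε i • a i‖⁻¹ • ∑ i, ε i • a i : EuclideanSpace ℝ (Fin n)), a j⟫| =
      2 ^ 6 / ((n : ℝ) - 2) ^ ((n : ℝ) / 2) ∧
    (n : ℝ) ^ (-(n : ℝ) / 2) ≤ 2 ^ 6 / ((n : ℝ) - 2) ^ ((n : ℝ) / 2) := by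
  have h6 : 6 ≤ n := by omega
  have hfil : Finset.univ.filter (fun i : Fin n => (i:ℕ) < 6)
      = Finset.univ.map (Fin.castLEEmb h6) := by
    ext i
    simp only [Finset.mem_filter, Finset.mem_univ, true_and, Finset.mem_map,
      Fin.castLEEmb_apply]
    constructor
    · intro hi; exact ⟨⟨i, hi⟩, by ext; simp⟩
    · rintro ⟨j, rfl⟩; exact j.isLt
  have hsum : ∀ f : Fin n → ℝ, ∑ i, f i = (∑ j : Fin 6, f (Fin.castLE h6 j)) +
      ∑ i ∈ Finset.univ.filter (fun i : Fin n => ¬ (i:ℕ) < 6), f i := by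
    intro f
    rw [← Finset.sum_filter_add_sum_filter_not Finset.univ (fun i : Fin n => (i:ℕ) < 6) f,
      hfil, Finset.sum_map]
    rfl
  have hcardc : (Finset.univ.filter (fun i : Fin n => ¬ (i:ℕ) < 6)).card = n - 6 := by
    have h := Finset.card_filter_add_card_filter_not
      (s := (Finset.univ : Finset (Fin n))) (p := fun i : Fin n => (i:ℕ) < 6)
    rw [hfil] at h
    simp only [Finset.card_map, Finset.card_univ, Fintype.card_fin] at h
    omega
  have hsum2 : ∀ (f : Fin n → ℝ) (c d : ℝ), (∀ i : Fin n, (i:ℕ) < 6 → f i = c) →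
      (∀ i : Fin n, ¬ (i:ℕ) < 6 → f i = d) →
      ∑ i, f i = 6 * c + ((n:ℝ) - 6) * d := by
    intro f c d hc hd
    rw [hsum f, Finset.sum_congr rfl (fun j _ => hc _ (by simpa using j.isLt)),
      Finset.sum_congr rfl (fun i hi => hd i (by simpa using (Finset.mem_filter.mp hi).2)),
      Finset.sum_const, Finset.sum_const, hcardc]
    have h16 : ((n - 6 : ℕ) : ℝ) = (n:ℝ) - 6 := by push_cast [h6]; ring
    simp only [Finset.card_univ, Fintype.card_fin, nsmul_eq_mul, h16]
    norm_num
  set S : EuclideanSpace ℝ (Fin n) := ∑ i, ε i • a i with hSdef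
  have hS : ∀ k : Fin n, S k = if (k:ℕ) < 6 then 2 * (Real.sqrt 6)⁻¹ else 1 := by
    intro k
    have h0 : S k = ∑ i, ε i * a i k := by rw [hSdef, WithLp.ofLp_sum, Finset.sum_apply]; rfl
    rw [h0, hsum]
    have h1 : ∑ j : Fin 6, ε (Fin.castLE h6 j) * a (Fin.castLE h6 j) k = 2 * b k := by
      have hab : ∀ j : Fin 6, a (Fin.castLE h6 j) = b := fun j => by
        rw [ha]; simp [Fin.coe_castLE, j.isLt]
      calc ∑ j : Fin 6, ε (Fin.castLE h6 j) * a (Fin.castLE h6 j) k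
          = (∑ j : Fin 6, ε (Fin.castLE h6 j)) * b k := by
            rw [Finset.sum_mul]; exact Finset.sum_congr rfl fun j _ => by rw [hab]
        _ = 2 * b k := by
            congr 1
            simp only [hε, Fin.coe_castLE]
            rw [Fin.sum_univ_six]
            norm_num [show ((0:Fin 6):ℕ) = 0 from rfl, show ((1:Fin 6):ℕ) = 1 from rfl,
              show ((2:Fin 6):ℕ) = 2 from rfl, show ((3:Fin 6):ℕ) = 3 from rfl,
              show ((4:Fin 6):ℕ) = 4 from rfl, show ((5:Fin 6):ℕ) = 5 from rfl]
    have h2 : ∑ i ∈ Finset.univ.filter (fun i : Fin n => ¬ (i:ℕ) < 6), ε i * a i k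
        = if (k:ℕ) < 6 then 0 else 1 := by
      have hc : ∀ i ∈ Finset.univ.filter (fun i : Fin n => ¬ (i:ℕ) < 6),
          ε i * a i k = if k = i then ε i else 0 := by
        intro i hi
        simp only [Finset.mem_filter, Finset.mem_univ, true_and] at hi
        rw [ha]
        simp only [hi, if_neg, EuclideanSpace.single_apply]
        by_cases hk : k = i <;> simp [hk]
      rw [Finset.sum_congr rfl hc, Finset.sum_ite_eq]
      by_cases hk : (k:ℕ) < 6
      · simp [hk]
      · simp only [Finset.mem_filter, Finset.mem_univ, true_and, hk, if_true, if_false]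
        rw [hε]
        have : ¬((k:ℕ) = 4 ∨ (k:ℕ) = 5) := by omega
        simp [this, hk]
    rw [h1, h2]
    by_cases hk : (k:ℕ) < 6 <;> simp [hk, hb, hb k]
  have hss : (Real.sqrt 6)⁻¹ * (Real.sqrt 6)⁻¹ = 6⁻¹ := by
    rw [← mul_inv, Real.mul_self_sqrt (by norm_num)]
  have hn2 : (0:ℝ) < (n:ℝ) - 2 := by
    have : (7:ℝ) ≤ (n:ℝ) := by exact_mod_cast hn
    linarith
  have hnorm : ‖S‖ = Real.sqrt ((n:ℝ) - 2) := by
    rw [EuclideanSpace.norm_eq]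
    congr 1
    rw [hsum2 (fun k => ‖S k‖^2) ((4:ℝ)/6) 1
      (fun k hk => by show ‖S k‖^2 = (4:ℝ)/6; rw [Real.norm_eq_abs, sq_abs, hS, if_pos hk]; ring_nf; nlinarith [hss])
      (fun k hk => by show ‖S k‖^2 = (1:ℝ); rw [Real.norm_eq_abs, sq_abs, hS, if_neg hk]; norm_num)]
    ring
  have hnormpos : 0 < ‖S‖ := by
    rw [hnorm]; exact Real.sqrt_pos.mpr hn2
  have hinner : ∀ j : Fin n, ⟪S, a j⟫ = if (j:ℕ) < 6 then (2:ℝ) else 1 := by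
    intro j
    by_cases hj : (j:ℕ) < 6
    · rw [ha]
      simp only [hj, if_true]
      have h0 : ⟪S, b⟫ = ∑ k, S k * b k := by simp [PiLp.inner_apply]; exact Finset.sum_congr rfl fun _ _ => mul_comm _ _
      rw [h0, hsum2 (fun k => S k * b k) (2 * 6⁻¹) 0
        (fun k hk => by show S k * b k = _; rw [hS, hb, if_pos hk, if_pos hk, mul_assoc, hss])
        (fun k hk => by show S k * b k = _; rw [hS, hb, if_neg hk, if_neg hk, mul_zero])]
      norm_num
    · rw [ha]
      simp only [hj, if_false]
      rw [EuclideanSpace.inner_single_right]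
      simp [hS, hj]
  have hsqn : (Real.sqrt ((n:ℝ)-2))^n = ((n:ℝ)-2) ^ ((n:ℝ)/2) := by
    rw [Real.sqrt_eq_rpow, ← Real.rpow_natCast (((n:ℝ)-2) ^ ((1:ℝ)/2)) n,
      ← Real.rpow_mul hn2.le]
    ring_nf
  constructor
  · have habs : ∀ j : Fin n, |⟪(‖S‖⁻¹ • S : EuclideanSpace ℝ (Fin n)), a j⟫|
        = ‖S‖⁻¹ * (if (j:ℕ) < 6 then (2:ℝ) else 1) := by
      intro j
      rw [real_inner_smul_left, hinner, abs_mul, abs_of_nonneg (by positivity)]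
      congr 1
      by_cases hj : (j:ℕ) < 6 <;> simp [hj]
    have hprod : ∏ j : Fin n, (if (j:ℕ) < 6 then (2:ℝ) else 1) = 2^6 := by
      rw [← Finset.prod_filter_mul_prod_filter_not Finset.univ (fun i : Fin n => (i:ℕ) < 6)]
      rw [Finset.prod_congr rfl (fun i hi => if_pos ((Finset.mem_filter.mp hi).2)),
        Finset.prod_congr rfl (fun i hi => if_neg ((Finset.mem_filter.mp hi).2)),
        Finset.prod_const, Finset.prod_const, hfil]
      simp
    calc ∏ j, |⟪(‖S‖⁻¹ • S : EuclideanSpace ℝ (Fin n)), a j⟫|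
        = ∏ j : Fin n, ‖S‖⁻¹ * (if (j:ℕ) < 6 then (2:ℝ) else 1) :=
          Finset.prod_congr rfl fun j _ => habs j
      _ = (‖S‖⁻¹)^n * ∏ j : Fin n, (if (j:ℕ) < 6 then (2:ℝ) else 1) := by
          rw [Finset.prod_mul_distrib, Finset.prod_const]
          simp
      _ = (‖S‖⁻¹)^n * 2^6 := by rw [hprod]
      _ = 2^6 / ((n:ℝ) - 2) ^ ((n:ℝ)/2) := by
          rw [hnorm, inv_pow, hsqn]
          ring
  · have hposn : (0:ℝ) < (n:ℝ) := by linarith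
    have hx : ((n:ℝ)-2) ^ ((n:ℝ)/2) ≤ (n:ℝ) ^ ((n:ℝ)/2) :=
      Real.rpow_le_rpow hn2.le (by linarith) (by positivity)
    have hp2 : 0 < ((n:ℝ)-2) ^ ((n:ℝ)/2) := Real.rpow_pos_of_pos hn2 _
    rw [le_div_iff₀ hp2]
    calc (n:ℝ) ^ (-(n:ℝ)/2) * ((n:ℝ)-2) ^ ((n:ℝ)/2)
        ≤ (n:ℝ) ^ (-(n:ℝ)/2) * (n:ℝ) ^ ((n:ℝ)/2) := by
          exact mul_le_mul_of_nonneg_left hx (Real.rpow_nonneg hposn.le _)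
      _ = 1 := by
          rw [← Real.rpow_add hposn, show -(n:ℝ)/2 + (n:ℝ)/2 = 0 by ring, Real.rpow_zero]
      _ ≤ 2^6 := by norm_num
end

section
/- For every integer n ≥ 2: sup{ |((z + iw)ⁿ + (z − iw)ⁿ)/2| : z, w ∈ ℂ, |z|² + |w|² = 1 } = 2^{(n−2)/2}, while sup{ |Re((x + iy)ⁿ)| : x, y ∈ ℝ, x² + y² = 1 } = 1. In particular, the complex extension of the n-homogeneous polynomial Rₙ(x,y) = Re(x+iy)ⁿ has norm on the complex Euclidean unit sphere exactly 2^{(n−2)/2} times its norm on the real unit sphere. -/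
/-- Sharpness of the complexification estimate: for `n ≥ 2`, the complex extension
`((z+iw)ⁿ + (z−iw)ⁿ)/2` of `Rₙ(x,y) = Re(x+iy)ⁿ` has sup norm `2^((n−2)/2)` on the complex
Euclidean unit sphere of `ℂ²`, whereas `Rₙ` has sup norm `1` on the real unit circle. -/
theorem stmt16 (n : ℕ) (hn : 2 ≤ n) :
    sSup {r : ℝ | ∃ z w : ℂ, ‖z‖ ^ 2 + ‖w‖ ^ 2 = 1 ∧
        r = ‖((z + Complex.I * w) ^ n + (z - Complex.I * w) ^ n) / 2‖} =
      (2 : ℝ) ^ (((n : ℝ) - 2) / 2) ∧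
    sSup {r : ℝ | ∃ x y : ℝ, x ^ 2 + y ^ 2 = 1 ∧
        r = |(((x : ℂ) + Complex.I * (y : ℂ)) ^ n).re|} = 1 := by
  have hs2 : Real.sqrt 2 ^ 2 = 2 := Real.sq_sqrt (by norm_num)
  have hs2pos : (0:ℝ) < Real.sqrt 2 := Real.sqrt_pos.mpr (by norm_num)
  have hM : (2 : ℝ) ^ (((n : ℝ) - 2) / 2) = Real.sqrt 2 ^ (n - 2) := by
    have h1 : ((n : ℝ) - 2) = ((n - 2 : ℕ) : ℝ) := by
      push_cast [Nat.cast_sub hn]; ring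
    rw [h1, Real.sqrt_eq_rpow, ← Real.rpow_natCast (2 ^ ((1:ℝ)/2)) (n-2),
      ← Real.rpow_mul (by norm_num)]
    ring_nf
  constructor
  · rw [hM]
    apply IsGreatest.csSup_eq
    constructor
    · refine ⟨(Real.sqrt 2 / 2 : ℝ), -Complex.I * (Real.sqrt 2 / 2 : ℝ), ?_, ?_⟩
      · simp [Complex.norm_real, Real.norm_eq_abs, abs_of_nonneg (Real.sqrt_nonneg 2)]
        nlinarith
      · have key : Complex.I * (-Complex.I * ((Real.sqrt 2 / 2 : ℝ) : ℂ))
            = ((Real.sqrt 2 / 2 : ℝ) : ℂ) := by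
          rw [← mul_assoc, mul_neg, Complex.I_mul_I]; ring
        have h1 : ((Real.sqrt 2 / 2 : ℝ) : ℂ) + Complex.I * (-Complex.I * ((Real.sqrt 2 / 2 : ℝ):ℂ))
            = ((Real.sqrt 2 : ℝ) : ℂ) := by rw [key]; push_cast; ring
        have h2 : ((Real.sqrt 2 / 2 : ℝ) : ℂ) - Complex.I * (-Complex.I * ((Real.sqrt 2 / 2 : ℝ):ℂ))
            = 0 := by rw [key]; ring
        rw [h1, h2, zero_pow (by omega), add_zero, norm_div, norm_pow]
        simp only [Complex.norm_real, Real.norm_eq_abs, Complex.norm_two, abs_of_nonneg hs2pos.le]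
        conv_rhs => rw [show n = (n - 2) + 2 by omega]
        rw [pow_add, hs2]
        ring
    · rintro r ⟨z, w, hzw, rfl⟩
      set u := z + Complex.I * w with hu
      set v := z - Complex.I * w with hv
      have hpar : ‖u‖ ^ 2 + ‖v‖ ^ 2 = 2 := by
        rw [Complex.sq_norm, Complex.sq_norm] at hzw ⊢
        simp only [hu, hv, Complex.normSq_apply, Complex.add_re, Complex.add_im,
          Complex.sub_re, Complex.sub_im, Complex.mul_re, Complex.mul_im,
          Complex.I_re, Complex.I_im] at hzw ⊢
        nlinarith [hzw]
      set a := ‖u‖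
      set b := ‖v‖
      have ha0 : 0 ≤ a := norm_nonneg u
      have hb0 : 0 ≤ b := norm_nonneg v
      have ha : a ≤ Real.sqrt 2 := by nlinarith
      have hb : b ≤ Real.sqrt 2 := by nlinarith
      have han : a ^ n ≤ a ^ 2 * Real.sqrt 2 ^ (n - 2) := by
        conv_lhs => rw [show n = 2 + (n - 2) by omega]
        rw [pow_add]
        exact mul_le_mul_of_nonneg_left (pow_le_pow_left₀ ha0 ha _) (by positivity)
      have hbn : b ^ n ≤ b ^ 2 * Real.sqrt 2 ^ (n - 2) := by
        conv_lhs => rw [show n = 2 + (n - 2) by omega]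
        rw [pow_add]
        exact mul_le_mul_of_nonneg_left (pow_le_pow_left₀ hb0 hb _) (by positivity)
      calc ‖(u ^ n + v ^ n) / 2‖
          ≤ (a ^ n + b ^ n) / 2 := by
            rw [norm_div]
            simp only [Complex.norm_two]
            gcongr
            calc ‖u ^ n + v ^ n‖ ≤ ‖u ^ n‖ + ‖v ^ n‖ :=
              norm_add_le _ _
            _ = a ^ n + b ^ n := by rw [norm_pow, norm_pow]
        _ ≤ (a ^ 2 * Real.sqrt 2 ^ (n-2) + b ^ 2 * Real.sqrt 2 ^ (n-2)) / 2 := by gcongr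
        _ = Real.sqrt 2 ^ (n - 2) := by rw [← add_mul, hpar]; ring
  · apply IsGreatest.csSup_eq
    constructor
    · exact ⟨1, 0, by norm_num, by norm_num⟩
    · rintro r ⟨x, y, hxy, rfl⟩
      have h1 : ‖(x : ℂ) + Complex.I * (y : ℂ)‖ = 1 := by
        have h2 : ‖(x : ℂ) + Complex.I * (y : ℂ)‖ ^ 2 = 1 := by
          rw [Complex.sq_norm]
          simp [Complex.normSq_apply]
          nlinarith
        nlinarith [norm_nonneg ((x : ℂ) + Complex.I * (y : ℂ))]
      calc |(((x : ℂ) + Complex.I * (y : ℂ)) ^ n).re|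
          ≤ ‖((x : ℂ) + Complex.I * (y : ℂ)) ^ n‖ := Complex.abs_re_le_norm _
        _ = 1 := by rw [norm_pow, h1, one_pow]
end

section
/- Let n be an odd positive integer. Then for all x, y ∈ ℝ: Re((x + iy)ⁿ) = (−1)^{(n−1)/2} · 2^{n−1} · ∏_{j=0}^{n−1} ( x·cos(jπ/n) + y·sin(jπ/n) ). In particular, Rₙ(x,y) = Re(x+iy)ⁿ factors as K·⟨(x,y),a₁⟩⋯⟨(x,y),aₙ⟩ with unit vectors aⱼ = (cos(jπ/n), sin(jπ/n)) ∈ S_{ℝ²} and constant K = (−1)^{(n−1)/2}2^{n−1}. -/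
open Finset Polynomial Complex

lemma prod_range_sub_pow' {ζ : ℂ} {n : ℕ} (hn : 0 < n) (h : IsPrimitiveRoot ζ n) (u : ℂ) :
    ∏ j ∈ Finset.range n, (u - ζ ^ j) = u ^ n - 1 := by
  have : NeZero n := ⟨hn.ne'⟩
  have himg : nthRootsFinset n (1 : ℂ) = (Finset.range n).image (ζ ^ ·) := by
    ext w
    simp only [Polynomial.mem_nthRootsFinset hn (1 : ℂ), Finset.mem_image, Finset.mem_range]
    constructor
    · intro hw
      obtain ⟨i, hi, rfl⟩ := h.eq_pow_of_pow_eq_one hw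
      exact ⟨i, hi, rfl⟩
    · rintro ⟨i, hi, rfl⟩
      simp [← pow_mul, pow_mul', h.pow_eq_one]
  have := congrArg (Polynomial.eval u) (X_pow_sub_one_eq_prod hn h)
  simp only [eval_sub, eval_pow, eval_X, eval_one, eval_prod, eval_C, himg] at this
  rw [Finset.prod_image (fun i hi j hj hij =>
    h.pow_inj (mem_range.1 hi) (mem_range.1 hj) hij)] at this
  exact this.symm

lemma prod_range_sub_mul_pow' {ζ : ℂ} {n : ℕ} (hn : 0 < n) (h : IsPrimitiveRoot ζ n)
    (u w : ℂ) : ∏ j ∈ Finset.range n, (u - w * ζ ^ j) = u ^ n - w ^ n := by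
  rcases eq_or_ne w 0 with rfl | hw
  · simp [zero_pow hn.ne', Finset.prod_const]
  · have : ∏ j ∈ Finset.range n, (u - w * ζ ^ j)
        = ∏ j ∈ Finset.range n, (w * (u / w - ζ ^ j)) := by
      apply Finset.prod_congr rfl
      intro j _
      field_simp
    rw [this, Finset.prod_mul_distrib, Finset.prod_const, Finset.card_range,
      prod_range_sub_pow' hn h, mul_sub, mul_one, ← mul_pow]
    field_simp

/-- For odd `n`, `Re((x+iy)ⁿ)` factors as
`(−1)^((n−1)/2)·2^(n−1)·∏_{j=0}^{n−1} (x·cos(jπ/n) + y·sin(jπ/n))`,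
a product of `n` linear forms given by the unit vectors `(cos(jπ/n), sin(jπ/n))`. -/
theorem stmt18 (n : ℕ) (hodd : Odd n) (hpos : 0 < n) (x y : ℝ) :
    (((x : ℂ) + Complex.I * (y : ℂ)) ^ n).re =
      (-1 : ℝ) ^ ((n - 1) / 2) * 2 ^ (n - 1) *
        ∏ j ∈ Finset.range n,
          (x * Real.cos (j * Real.pi / n) + y * Real.sin (j * Real.pi / n)) := by
  obtain ⟨m, hm⟩ := hodd
  have hm' : n = 2 * m + 1 := by omega
  have hn0 : (n:ℂ) ≠ 0 := Nat.cast_ne_zero.2 hpos.ne'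
  have hprim := Complex.isPrimitiveRoot_exp n hpos.ne'
  set z : ℂ := (x:ℂ) + Complex.I * y with hz
  set c : ℂ := (x:ℂ) - Complex.I * y with hc
  apply Complex.ofReal_injective
  -- LHS
  have hconj : (starRingEnd ℂ) z = c := by
    rw [hz, hc]
    simp [map_add, map_mul, Complex.conj_ofReal, Complex.conj_I]
    ring
  have hre : ((z ^ n).re : ℂ) = (z ^ n + c ^ n) / 2 := by
    have h := Complex.add_conj (z ^ n)
    rw [map_pow, hconj] at h
    push_cast at h
    linear_combination (-(1:ℂ)/2) * h
  rw [hre]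
  -- RHS: cast into ℂ
  push_cast
  -- factor identity
  have hfac : ∀ j ∈ Finset.range n,
      ((x:ℂ) * Complex.cos ((j:ℂ)*(Real.pi:ℂ)/(n:ℂ)) + (y:ℂ) * Complex.sin ((j:ℂ)*(Real.pi:ℂ)/(n:ℂ)))
        = Complex.exp (-(((j:ℂ)*(Real.pi:ℂ)/(n:ℂ))*Complex.I))
          * (z + c * (Complex.exp (((j:ℂ)*(Real.pi:ℂ)/(n:ℂ))*Complex.I))^2) / 2 := by
    intro j _
    set θ : ℂ := (j:ℂ)*(Real.pi:ℂ)/(n:ℂ) with hθ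
    have hEE : Complex.exp (θ*Complex.I) * Complex.exp (-(θ*Complex.I)) = 1 := by
      rw [← Complex.exp_add, add_neg_cancel, Complex.exp_zero]
    rw [Complex.cos, Complex.sin]
    have hneg : -θ * Complex.I = -(θ * Complex.I) := by ring
    rw [hneg, hz, hc]
    linear_combination (-(((x:ℂ) - Complex.I * y) * Complex.exp (θ*Complex.I)) / 2) * hEE
  rw [Finset.prod_congr rfl hfac, Finset.prod_div_distrib, Finset.prod_const,
    Finset.card_range, Finset.prod_mul_distrib]
  -- product of exponentials
  have hsumnat : (∑ j ∈ Finset.range n, j) = m * n := by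
    have h := Finset.sum_range_id_mul_two n
    have h2 : n * (n-1) = (m*n)*2 := by subst hm'; simp [Nat.mul_comm]; ring
    omega
  have hprodexp : ∏ j ∈ Finset.range n, Complex.exp (-(((j:ℂ)*(Real.pi:ℂ)/(n:ℂ))*Complex.I))
      = (-1 : ℂ) ^ m := by
    rw [← Complex.exp_sum]
    have hterm : ∀ j ∈ Finset.range n, -(((j:ℂ)*(Real.pi:ℂ)/(n:ℂ))*Complex.I)
        = (j:ℂ) * (-((Real.pi:ℂ)*Complex.I)/(n:ℂ)) := by intros; ring
    rw [Finset.sum_congr rfl hterm, ← Finset.sum_mul, ← Nat.cast_sum, hsumnat]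
    have h3 : ((m*n : ℕ) : ℂ) * (-((Real.pi:ℂ)*Complex.I)/(n:ℂ))
        = (m:ℂ) * (-((Real.pi:ℂ)*Complex.I)) := by
      push_cast; field_simp
    rw [h3, Complex.exp_nat_mul, Complex.exp_neg, Complex.exp_pi_mul_I]
    norm_num
  rw [hprodexp]
  -- product of linear factors
  have hsq : ∀ j ∈ Finset.range n,
      (z + c * (Complex.exp (((j:ℂ)*(Real.pi:ℂ)/(n:ℂ))*Complex.I))^2)
        = z - (-c) * (Complex.exp (2 * (Real.pi:ℂ) * Complex.I / n)) ^ j := by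
    intro j _
    have h4 : (Complex.exp (((j:ℂ)*(Real.pi:ℂ)/(n:ℂ))*Complex.I))^2
        = (Complex.exp (2 * (Real.pi:ℂ) * Complex.I / n)) ^ j := by
      rw [← Complex.exp_nat_mul, ← Complex.exp_nat_mul]
      congr 1
      push_cast
      ring
    rw [h4]; ring
  rw [Finset.prod_congr rfl hsq, prod_range_sub_mul_pow' hpos hprim]
  have hoddn : Odd n := ⟨m, hm⟩
  rw [hoddn.neg_pow]
  -- final arithmetic
  have hdiv : (n - 1) / 2 = m := by omega
  rw [hdiv]
  have h2n : (2:ℂ) ^ n = 2 * 2 ^ (n - 1) := by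
    conv_lhs => rw [show n = (n-1)+1 by omega]
    rw [pow_succ]; ring
  rw [h2n]
  have hneg1 : (-1:ℂ) ^ m * (-1:ℂ) ^ m = 1 := by
    rw [← pow_add, ← two_mul, pow_mul]; norm_num
  have h2ne : (2:ℂ) ^ (n-1) ≠ 0 := pow_ne_zero _ two_ne_zero
  field_simp
  have hneg2 : (-1:ℂ) ^ (m * 2) = 1 := by rw [mul_comm, pow_mul]; norm_num
  linear_combination (-(((x:ℂ) - I * y) ^ n + ((x:ℂ) + I * y) ^ n)) * hneg2
end

section
/- Let n be an even positive integer. Then for all x, y ∈ ℝ: Re((x + iy)ⁿ) = (−1)^{n/2} · 2^{n−1} · ∏_{j=0}^{n−1} ( x·cos((2j+1)π/(2n)) + y·sin((2j+1)π/(2n)) ). In particular, Rₙ(x,y) = Re(x+iy)ⁿ factors as K·⟨(x,y),a₁⟩⋯⟨(x,y),aₙ⟩ with unit vectors aⱼ = (cos((2j+1)π/(2n)), sin((2j+1)π/(2n))) ∈ S_{ℝ²} and constant K = (−1)^{n/2}2^{n−1}. -/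
open Complex Finset Real in
lemma aux_roots (n : ℕ) (hn : 0 < n) (v : ℂ) :
    ∏ j ∈ Finset.range n, (v - Complex.exp (((2*j+1) * π / n) * I)) = v ^ n + 1 := by
  have hn' : (n : ℂ) ≠ 0 := Nat.cast_ne_zero.mpr hn.ne'
  have hζ := Complex.isPrimitiveRoot_exp n hn.ne'
  have he : (Complex.exp (π / n * I)) ^ n = -1 := by
    rw [← Complex.exp_nat_mul]
    rw [show (n : ℂ) * (π / n * I) = π * I by field_simp]
    exact Complex.exp_pi_mul_I
  have h := X_pow_sub_C_eq_prod hζ hn he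
  have h2 := congrArg (Polynomial.eval v) h
  simp only [Polynomial.eval_sub, Polynomial.eval_pow, Polynomial.eval_X, Polynomial.eval_C,
    Polynomial.eval_prod, Polynomial.eval_mul] at h2
  have h3 : ∀ j ∈ Finset.range n, (v - Complex.exp (((2*j+1) * π / n) * I))
      = v - Complex.exp (2 * π * I / n) ^ j * Complex.exp (π / n * I) := by
    intro j hj
    congr 1
    rw [← Complex.exp_nat_mul, ← Complex.exp_add]
    congr 1
    field_simp
  rw [Finset.prod_congr rfl h3, ← h2]
  ring

open Complex Finset Real in
lemma aux_prod (n : ℕ) (hn : 0 < n) (he : Even n) (z u : ℂ) :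
    ∏ j ∈ Finset.range n, (z + Complex.exp (((2*j+1) * π / n) * I) * u) = z ^ n + u ^ n := by
  rcases eq_or_ne u 0 with rfl | hu
  · simp [Finset.prod_const, zero_pow hn.ne']
  · have hu' : (-u) ≠ 0 := neg_ne_zero.mpr hu
    have hneg : (-u) ^ n = u ^ n := he.neg_pow u
    have hz : -u * (z / -u) = z := by field_simp
    have key := aux_roots n hn (z / (-u))
    have h3 : ∀ j ∈ Finset.range n, (z + Complex.exp (((2*j+1) * π / n) * I) * u)
        = (-u) * (z / (-u) - Complex.exp (((2*j+1) * π / n) * I)) := by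
      intro j hj
      rw [mul_sub, hz]
      ring
    rw [Finset.prod_congr rfl h3, Finset.prod_mul_distrib, Finset.prod_const,
      Finset.card_range, key, mul_add, mul_one, ← mul_pow, hz, hneg]

open Complex Finset Real in
lemma aux_factor (x y φ : ℝ) :
    ((x * Real.cos φ + y * Real.sin φ : ℝ) : ℂ) =
      (Complex.exp (-(φ:ℂ) * I) * ((x:ℂ) + I * y) + Complex.exp ((φ:ℂ) * I) * ((x:ℂ) - I * y)) / 2 := by
  rw [Complex.exp_mul_I, Complex.exp_mul_I, Complex.cos_neg, Complex.sin_neg]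
  push_cast
  linear_combination (Complex.sin φ * y) * Complex.I_sq

lemma aux_sum_odd (n : ℕ) : ∑ j ∈ Finset.range n, (2 * j + 1) = n ^ 2 := by
  induction n with
  | zero => simp
  | succ k ih => rw [Finset.sum_range_succ, ih]; ring

/-- For even positive `n`, `Re((x+iy)ⁿ)` factors as
`(−1)^(n/2)·2^(n−1)·∏_{j=0}^{n−1} (x·cos((2j+1)π/(2n)) + y·sin((2j+1)π/(2n)))`,
a product of `n` linear forms given by unit vectors. -/
theorem stmt19 (n : ℕ) (heven : Even n) (hpos : 0 < n) (x y : ℝ) :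
    (((x : ℂ) + Complex.I * (y : ℂ)) ^ n).re =
      (-1 : ℝ) ^ (n / 2) * 2 ^ (n - 1) *
        ∏ j ∈ Finset.range n,
          (x * Real.cos ((2 * j + 1) * Real.pi / (2 * n)) +
            y * Real.sin ((2 * j + 1) * Real.pi / (2 * n))) := by
  classical
  obtain ⟨m, hm⟩ := heven
  have hnm : n = 2 * m := by omega
  have hn2 : n / 2 = m := by omega
  have hnR : (n : ℝ) ≠ 0 := Nat.cast_ne_zero.mpr hpos.ne'
  have hnC : (n : ℂ) ≠ 0 := Nat.cast_ne_zero.mpr hpos.ne'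
  set z : ℂ := (x : ℂ) + Complex.I * y with hz
  set u : ℂ := (x : ℂ) - Complex.I * y with hu
  -- move to ℂ
  apply Complex.ofReal_injective
  rw [Complex.ofReal_mul, Complex.ofReal_mul, Complex.ofReal_prod, Complex.ofReal_pow,
    Complex.ofReal_pow, Complex.ofReal_neg, Complex.ofReal_one, Complex.ofReal_ofNat]
  -- the product of linear forms
  have hfac : ∀ j ∈ Finset.range n,
      ((x * Real.cos ((2 * j + 1) * Real.pi / (2 * n)) +
        y * Real.sin ((2 * j + 1) * Real.pi / (2 * n)) : ℝ) : ℂ) =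
      Complex.exp (-((((2 * j + 1) * Real.pi / (2 * n) : ℝ)) : ℂ) * Complex.I) / 2 *
        (z + Complex.exp ((((2 * (j:ℝ) + 1) * Real.pi / (n:ℝ) : ℝ) : ℂ) * Complex.I) * u) := by
    intro j hj
    rw [aux_factor]
    have hdiff : Complex.exp (((((2 * j + 1) * Real.pi / (2 * n) : ℝ)) : ℂ) * Complex.I) =
        Complex.exp (-((((2 * j + 1) * Real.pi / (2 * n) : ℝ)) : ℂ) * Complex.I) *
          Complex.exp ((((2 * (j:ℝ) + 1) * Real.pi / (n:ℝ) : ℝ) : ℂ) * Complex.I) := by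
      rw [← Complex.exp_add]
      congr 1
      push_cast
      field_simp
      ring
    rw [hdiff]
    ring
  rw [Finset.prod_congr rfl hfac, Finset.prod_mul_distrib, Finset.prod_div_distrib,
    Finset.prod_const, Finset.card_range, ← Complex.exp_sum]
  -- the roots product
  have hroots : ∏ j ∈ Finset.range n,
      (z + Complex.exp ((((2 * (j:ℝ) + 1) * Real.pi / (n:ℝ) : ℝ) : ℂ) * Complex.I) * u) =
      z ^ n + u ^ n := by
    have := aux_prod n hpos ⟨m, hm⟩ z u
    rw [← this]
    apply Finset.prod_congr rfl
    intro j hj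
    norm_cast
  rw [hroots]
  -- the exponential sum
  have hsum : ∑ j ∈ Finset.range n,
      -((((2 * j + 1) * Real.pi / (2 * n) : ℝ)) : ℂ) * Complex.I =
      (m : ℂ) * (-(Real.pi : ℂ) * Complex.I) := by
    have hs : ∑ j ∈ Finset.range n, ((2 * j + 1) * Real.pi / (2 * n) : ℝ) = m * Real.pi := by
      have h1 : ∑ j ∈ Finset.range n, ((2 * (j:ℝ) + 1)) = (n : ℝ) ^ 2 := by
        have := aux_sum_odd n
        have h2 := congrArg (Nat.cast : ℕ → ℝ) this
        push_cast at h2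
        convert h2 using 2
      calc ∑ j ∈ Finset.range n, ((2 * (j:ℝ) + 1) * Real.pi / (2 * n))
          = (∑ j ∈ Finset.range n, (2 * (j:ℝ) + 1)) * (Real.pi / (2 * n)) := by
            rw [Finset.sum_mul]
            exact Finset.sum_congr rfl fun j _ => mul_div_assoc _ _ _
        _ = (n : ℝ) ^ 2 * (Real.pi / (2 * n)) := by rw [h1]
        _ = m * Real.pi := by
            have hmR : (m : ℝ) ≠ 0 := Nat.cast_ne_zero.mpr (by omega)
            rw [hnm]; push_cast; field_simp
    calc ∑ j ∈ Finset.range n, -((((2 * j + 1) * Real.pi / (2 * n) : ℝ)) : ℂ) * Complex.I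
        = -(((∑ j ∈ Finset.range n, ((2 * j + 1) * Real.pi / (2 * n) : ℝ) : ℝ)) : ℂ) * Complex.I := by
          rw [Complex.ofReal_sum, ← Finset.sum_mul, ← Finset.sum_neg_distrib]
      _ = (m : ℂ) * (-(Real.pi : ℂ) * Complex.I) := by rw [hs]; push_cast; ring
  rw [hsum, Complex.exp_nat_mul]
  have hexp : Complex.exp (-(Real.pi : ℂ) * Complex.I) = -1 := by
    rw [show (-(Real.pi : ℂ) * Complex.I) = -(Real.pi * Complex.I) by ring, Complex.exp_neg,
      Complex.exp_pi_mul_I]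
    norm_num
  rw [hexp]
  -- real part identity
  have hconj : (starRingEnd ℂ) z = u := by
    simp [hz, hu, map_add, map_mul, Complex.conj_I, Complex.conj_ofReal]
    ring
  have hre : z ^ n + u ^ n = 2 * ((z ^ n).re : ℂ) := by
    rw [← hconj, ← map_pow, Complex.add_conj]
    push_cast
    ring
  rw [hre, hn2]
  -- final algebra
  have h1 : ((-1 : ℂ)) ^ m * (-1) ^ m = 1 := by
    rw [← mul_pow]; norm_num
  have h2 : (2 : ℂ) ^ (n - 1) * 2 = 2 ^ n := by
    rw [← pow_succ]; congr 1; omega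
  have h3 : (2 : ℂ) ^ n ≠ 0 := pow_ne_zero _ two_ne_zero
  have h5 : (2 : ℂ) ^ n * ((2 : ℂ) ^ n)⁻¹ = 1 := mul_inv_cancel₀ h3
  linear_combination (-(((z ^ n).re : ℂ))) * h1 +
    (-((-1:ℂ)^m * (-1)^m * ((2:ℂ)^n)⁻¹ * ((z ^ n).re : ℂ))) * h2 +
    (-((-1:ℂ)^m * (-1)^m * ((z ^ n).re : ℂ))) * h5
end
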